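/- arXiv:1406.0767 — 6 statements merged into one kernel-verified Lean document; each statement's English description precedes it below -/
import Mathlib

section
/- For any digraph F, the limit lim_{t→∞} χ_{dir,f}(F^{∧t})^{1/t} exists and equals r_D(F). -/
open Filter

/-- The AND product of two digraphs given by edge relations `E` and `F`. -/
def andProd {V W : Type*} (E : V → V → Prop) (F : W → W → Prop) :
    V × W → V × W → Prop :=
  fun p q => p ≠ q ∧ (p.1 = q.1 ∨ E p.1 q.1) ∧ (p.2 = q.2 ∨ F p.2 q.2)

/-- The `t`-th AND power of the digraph given by edge relation `E`. -/
def andPow {V : Type*} (E : V → V → Prop) (t : ℕ) :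
    (Fin t → V) → (Fin t → V) → Prop :=
  fun x y => x ≠ y ∧ ∀ i, x i = y i ∨ E (x i) (y i)

/-- Chromatic number of a digraph: minimum number of classes in a partition of the
vertex set into sets containing no edge in either direction. -/
noncomputable def chromNum {V : Type*} (E : V → V → Prop) : ℕ :=
  sInf {n : ℕ | ∃ c : V → Fin n, ∀ u v : V, E u v → c u ≠ c v}

/-- Independence number of a digraph: maximum size of a vertex set with no edge
in either direction between its elements. -/
noncomputable def indepNum {V : Type*} (E : V → V → Prop) : ℕ :=
  sSup {n : ℕ | ∃ S : Finset V, S.card = n ∧ ∀ u ∈ S, ∀ v ∈ S, u ≠ v → ¬ E u v}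

/-- A set of vertices is acyclic if the induced subdigraph contains no directed
closed walk (equivalently, for finite digraphs, no directed cycle). -/
def IsAcyclicSet {V : Type*} (E : V → V → Prop) (U : Set V) : Prop :=
  ¬ ∃ (n : ℕ) (c : Fin (n + 1) → V), (∀ i, c i ∈ U) ∧ ∀ i, E (c i) (c (i + 1))

/-- Dichromatic number: minimum number of acyclic sets covering the vertex set. -/
noncomputable def dichromNum {V : Type*} (E : V → V → Prop) : ℕ :=
  sInf {n : ℕ | ∃ c : V → Fin n, ∀ k : Fin n, IsAcyclicSet E {v | c v = k}}

/-- Acyclicity number: maximum size of an acyclic subset of the vertex set. -/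
noncomputable def acycNum {V : Type*} (E : V → V → Prop) : ℕ :=
  sSup {n : ℕ | ∃ U : Finset V, U.card = n ∧ IsAcyclicSet E (↑U : Set V)}

/-- Fractional dichromatic number: minimum total weight of a fractional directed
coloring, i.e. nonnegative weights on acyclic sets covering each vertex with
total weight at least 1. -/
noncomputable def fracDichromNum {V : Type*} [Fintype V] (E : V → V → Prop) : ℝ :=
  letI := Classical.decEq V
  sInf {w : ℝ | ∃ g : Finset V → ℝ,
    (∀ U, 0 ≤ g U) ∧
    (∀ U : Finset V, ¬ IsAcyclicSet E (↑U : Set V) → g U = 0) ∧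
    (∀ v : V, 1 ≤ ∑ U : Finset V, (if v ∈ U then g U else 0)) ∧
    w = ∑ U : Finset V, g U}

/-- A digraph is vertex-transitive if any vertex can be mapped to any other by an
automorphism. -/
def VertexTransitive {V : Type*} (E : V → V → Prop) : Prop :=
  ∀ u v : V, ∃ σ : Equiv.Perm V, (∀ a b : V, E (σ a) (σ b) ↔ E a b) ∧ σ u = v

/-- The (undirected, viewed as symmetric) closure graph of a digraph: distinct
vertices `a, b` are adjacent iff `(a,b)` or `(b,a)` is an edge, or `a` and `b`
have a common out-neighbour. -/
def closureRel {V : Type*} (E : V → V → Prop) : V → V → Prop :=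
  fun a b => a ≠ b ∧ (E a b ∨ E b a ∨ ∃ v, E a v ∧ E b v)

set_option linter.unusedSectionVars false
section Basic

variable {W : Type*} {R : W → W → Prop}

lemma isAcyclicSet_subset {U U' : Set W} (h : U ⊆ U') (hU' : IsAcyclicSet R U') :
    IsAcyclicSet R U := by
  rintro ⟨n, c, hc, he⟩
  exact hU' ⟨n, c, fun i => h (hc i), he⟩

lemma isAcyclicSet_of_no_edge {U : Set W} (h : ∀ u ∈ U, ∀ v ∈ U, ¬ R u v) :
    IsAcyclicSet R U := by
  rintro ⟨n, c, hc, he⟩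
  exact h (c 0) (hc 0) (c (0+1)) (hc (0+1)) (he 0)

variable [Fintype W] [Nonempty W]

lemma chromNum_set_nonempty (hR : ∀ x y, R x y → x ≠ y) :
    {n : ℕ | ∃ c : W → Fin n, ∀ u v : W, R u v → c u ≠ c v}.Nonempty := by
  refine ⟨Fintype.card W, Fintype.equivFin W, fun u v huv => ?_⟩
  simp only [ne_eq, EmbeddingLike.apply_eq_iff_eq]
  exact hR u v huv

lemma chromNum_le {m : ℕ} (h : ∃ c : W → Fin m, ∀ u v : W, R u v → c u ≠ c v) :
    chromNum R ≤ m := Nat.sInf_le h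

lemma exists_chromColoring (hR : ∀ x y, R x y → x ≠ y) :
    ∃ c : W → Fin (chromNum R), ∀ u v : W, R u v → c u ≠ c v :=
  Nat.sInf_mem (chromNum_set_nonempty hR)

lemma one_le_chromNum (hR : ∀ x y, R x y → x ≠ y) : 1 ≤ chromNum R := by
  by_contra h
  push_neg at h
  interval_cases h' : chromNum R
  · obtain ⟨c, -⟩ := exists_chromColoring hR
    rw [h'] at c
    exact (c (Classical.arbitrary W)).elim0

lemma chromNum_le_card (hR : ∀ x y, R x y → x ≠ y) : chromNum R ≤ Fintype.card W := by
  refine chromNum_le ⟨Fintype.equivFin W, fun u v huv => ?_⟩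
  simp only [ne_eq, EmbeddingLike.apply_eq_iff_eq]
  exact hR u v huv

lemma dichromNum_set_nonempty (hR : ∀ x y, R x y → x ≠ y) :
    {n : ℕ | ∃ c : W → Fin n, ∀ k : Fin n, IsAcyclicSet R {v | c v = k}}.Nonempty := by
  refine ⟨Fintype.card W, Fintype.equivFin W, fun k => isAcyclicSet_of_no_edge ?_⟩
  rintro u hu v hv huv
  exact hR u v huv (by simpa using hu.trans hv.symm)

lemma dichromNum_le {m : ℕ}
    (h : ∃ c : W → Fin m, ∀ k : Fin m, IsAcyclicSet R {v | c v = k}) :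
    dichromNum R ≤ m := Nat.sInf_le h

lemma exists_dichromColoring (hR : ∀ x y, R x y → x ≠ y) :
    ∃ c : W → Fin (dichromNum R), ∀ k, IsAcyclicSet R {v | c v = k} :=
  Nat.sInf_mem (dichromNum_set_nonempty hR)

lemma one_le_dichromNum (hR : ∀ x y, R x y → x ≠ y) : 1 ≤ dichromNum R := by
  by_contra h
  push_neg at h
  interval_cases h' : dichromNum R
  · obtain ⟨c, -⟩ := exists_dichromColoring hR
    rw [h'] at c
    exact (c (Classical.arbitrary W)).elim0

end Basic
section Frac

variable {W : Type*} [Fintype W] [Nonempty W] (R : W → W → Prop)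

/-- The feasible-weight set defining `fracDichromNum`. -/
def fracSet : Set ℝ :=
  letI := Classical.decEq W
  {w : ℝ | ∃ g : Finset W → ℝ,
    (∀ U, 0 ≤ g U) ∧
    (∀ U : Finset W, ¬ IsAcyclicSet R (↑U : Set W) → g U = 0) ∧
    (∀ v : W, 1 ≤ ∑ U : Finset W, (if v ∈ U then g U else 0)) ∧
    w = ∑ U : Finset W, g U}

lemma fracDichromNum_eq : fracDichromNum R = sInf (fracSet R) := rfl

variable {R}

lemma mem_fracSet_of_coloring {m : ℕ} (c : W → Fin m)
    (hc : ∀ u v : W, R u v → c u ≠ c v) : (m : ℝ) ∈ fracSet R := by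
  letI := Classical.decEq W
  set g : Finset W → ℝ :=
    fun U => ∑ k : Fin m, if Finset.univ.filter (fun v => c v = k) = U then (1:ℝ) else 0 with hg
  have hgnn : ∀ U, 0 ≤ g U := fun U =>
    Finset.sum_nonneg fun k _ => by positivity
  have htot : ∑ U : Finset W, g U = m := by
    rw [Finset.sum_comm]
    simp [Finset.sum_ite_eq]
  refine ⟨g, hgnn, ?_, ?_, htot.symm⟩
  · intro U hU
    by_contra hne
    apply hU
    have : ∃ k : Fin m, Finset.univ.filter (fun v => c v = k) = U := by
      by_contra hk
      push_neg at hk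
      apply hne
      rw [hg]
      exact Finset.sum_eq_zero fun k _ => if_neg (hk k)
    obtain ⟨k, hk⟩ := this
    apply isAcyclicSet_of_no_edge
    intro u hu v hv huv
    rw [← hk] at hu hv
    simp only [Finset.coe_filter, Set.mem_setOf_eq] at hu hv
    exact hc u v huv (hu.2.trans hv.2.symm)
  · intro v
    have hv : v ∈ Finset.univ.filter (fun w => c w = c v) := by simp
    have h1 : (1:ℝ) ≤ g (Finset.univ.filter (fun w => c w = c v)) := by
      rw [hg]
      have := Finset.single_le_sum (f := fun k : Fin m =>
          if Finset.univ.filter (fun v' => c v' = k) = Finset.univ.filter (fun w => c w = c v)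
          then (1:ℝ) else 0)
        (fun k _ => by positivity) (Finset.mem_univ (c v))
      simpa using this
    calc (1:ℝ) ≤ g (Finset.univ.filter (fun w => c w = c v)) := h1
    _ = (if v ∈ Finset.univ.filter (fun w => c w = c v)
          then g (Finset.univ.filter (fun w => c w = c v)) else 0) := by rw [if_pos hv]
    _ ≤ ∑ U : Finset W, (if v ∈ U then g U else 0) :=
        Finset.single_le_sum (f := fun U : Finset W => if v ∈ U then g U else 0)
          (fun U _ => by by_cases h : v ∈ U <;> simp [h, hgnn U]) (Finset.mem_univ _)

lemma one_le_of_mem_fracSet {w : ℝ} (hw : w ∈ fracSet R) : 1 ≤ w := by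
  classical
  obtain ⟨g, hgnn, -, hcov, rfl⟩ := hw
  refine le_trans (hcov (Classical.arbitrary W)) (Finset.sum_le_sum fun U _ => ?_)
  by_cases h : Classical.arbitrary W ∈ U <;> simp [h, hgnn U]

lemma fracSet_bddBelow : BddBelow (fracSet R) :=
  ⟨1, fun w hw => one_le_of_mem_fracSet hw⟩

lemma fracSet_nonempty (hR : ∀ x y, R x y → x ≠ y) : (fracSet R).Nonempty := by
  obtain ⟨c, hc⟩ := exists_chromColoring hR
  exact ⟨_, mem_fracSet_of_coloring c hc⟩

lemma one_le_fracDichromNum (hR : ∀ x y, R x y → x ≠ y) : 1 ≤ fracDichromNum R := by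
  rw [fracDichromNum_eq]
  exact le_csInf (fracSet_nonempty hR) fun w hw => one_le_of_mem_fracSet hw

lemma fracDichromNum_le_chromNum (hR : ∀ x y, R x y → x ≠ y) :
    fracDichromNum R ≤ (chromNum R : ℝ) := by
  rw [fracDichromNum_eq]
  obtain ⟨c, hc⟩ := exists_chromColoring hR
  exact csInf_le fracSet_bddBelow (mem_fracSet_of_coloring c hc)

end Frac
section Greedy

variable {W : Type*} [Fintype W] [Nonempty W] {R : W → W → Prop}

/-- One greedy step: some acyclic set covers at least a `1/w` fraction of `S`. -/
lemma greedy_step {w : ℝ} {g : Finset W → ℝ}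
    [DecidableEq W]
    (hgnn : ∀ U, 0 ≤ g U)
    (hac : ∀ U : Finset W, ¬ IsAcyclicSet R (↑U : Set W) → g U = 0)
    (hcov : ∀ v : W, 1 ≤ ∑ U : Finset W, (if v ∈ U then g U else 0))
    (hw : w = ∑ U : Finset W, g U)
    {S : Finset W} (hS : S.Nonempty) :
    ∃ U : Finset W, IsAcyclicSet R (↑U : Set W) ∧
      (S.card : ℝ) ≤ w * ((S.filter (· ∈ U)).card : ℝ) := by
  classical
  obtain ⟨v₀, hv₀⟩ := hS
  -- support is nonempty
  have hTne : (Finset.univ.filter (fun U : Finset W => 0 < g U)).Nonempty := by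
    have h1 : (0:ℝ) < ∑ U : Finset W, (if v₀ ∈ U then g U else 0) :=
      lt_of_lt_of_le one_pos (hcov v₀)
    obtain ⟨U, -, hU⟩ := Finset.exists_ne_zero_of_sum_ne_zero (ne_of_gt h1)
    refine ⟨U, Finset.mem_filter.mpr ⟨Finset.mem_univ _, ?_⟩⟩
    rcases (hgnn U).lt_or_eq with h | h
    · exact h
    · exfalso; apply hU; rw [← h]; split <;> rfl
  obtain ⟨U₀, hU₀T, hU₀max⟩ := Finset.exists_max_image _
    (fun U : Finset W => (S.filter (· ∈ U)).card) hTne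
  have hgU₀ : 0 < g U₀ := (Finset.mem_filter.mp hU₀T).2
  refine ⟨U₀, by_contra fun hcontra => absurd (hac U₀ hcontra) (ne_of_gt hgU₀), ?_⟩
  have key : (S.card : ℝ) ≤ ∑ U : Finset W, g U * ((S.filter (· ∈ U)).card : ℝ) := by
    have : (S.card : ℝ) = ∑ _v ∈ S, (1:ℝ) := by simp
    rw [this]
    calc ∑ _v ∈ S, (1:ℝ) ≤ ∑ v ∈ S, ∑ U : Finset W, (if v ∈ U then g U else 0) :=
          Finset.sum_le_sum fun v _ => hcov v
    _ = ∑ U : Finset W, ∑ v ∈ S, (if v ∈ U then g U else 0) := Finset.sum_comm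
    _ = ∑ U : Finset W, g U * ((S.filter (· ∈ U)).card : ℝ) := by
        refine Finset.sum_congr rfl fun U _ => ?_
        rw [Finset.sum_ite, Finset.sum_const, Finset.sum_const_zero, add_zero,
          nsmul_eq_mul, mul_comm]
  calc (S.card : ℝ) ≤ ∑ U : Finset W, g U * ((S.filter (· ∈ U)).card : ℝ) := key
  _ ≤ ∑ U : Finset W, g U * ((S.filter (· ∈ U₀)).card : ℝ) := by
      refine Finset.sum_le_sum fun U _ => ?_
      rcases (hgnn U).lt_or_eq with h | h
      · refine mul_le_mul_of_nonneg_left ?_ (le_of_lt h)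
        exact_mod_cast hU₀max U (Finset.mem_filter.mpr ⟨Finset.mem_univ _, h⟩)
      · rw [← h]; simp
  _ = w * ((S.filter (· ∈ U₀)).card : ℝ) := by rw [hw, Finset.sum_mul]

/-- Greedy covering: any set can be covered by roughly `w * log |S|` acyclic sets. -/
lemma greedy_cover {w : ℝ} {g : Finset W → ℝ}
    [DecidableEq W]
    (hgnn : ∀ U, 0 ≤ g U)
    (hac : ∀ U : Finset W, ¬ IsAcyclicSet R (↑U : Set W) → g U = 0)
    (hcov : ∀ v : W, 1 ≤ ∑ U : Finset W, (if v ∈ U then g U else 0))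
    (hw : w = ∑ U : Finset W, g U) (hw1 : 1 ≤ w) :
    ∀ (m : ℕ) (S : Finset W), S.card ≤ m →
      ∃ L : List (Finset W), (∀ U ∈ L, IsAcyclicSet R (↑U : Set W)) ∧
        (∀ v ∈ S, ∃ U ∈ L, v ∈ U) ∧
        (L.length : ℝ) ≤ (⌈w⌉₊ : ℝ) * (Real.log S.card + 1) := by
  have hKw : w ≤ (⌈w⌉₊ : ℝ) := Nat.le_ceil w
  have hK1 : (1:ℝ) ≤ (⌈w⌉₊ : ℝ) := le_trans hw1 hKw
  have hK0 : (0:ℝ) < (⌈w⌉₊ : ℝ) := lt_of_lt_of_le one_pos hK1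
  have hw0 : (0:ℝ) < w := lt_of_lt_of_le one_pos hw1
  intro m
  induction m with
  | zero =>
    intro S hS
    have : S = ∅ := Finset.card_eq_zero.mp (Nat.le_zero.mp hS)
    subst this
    refine ⟨[], by simp, by simp, ?_⟩
    simp only [List.length_nil, Nat.cast_zero]
    positivity
  | succ m ih =>
    intro S hS
    rcases S.eq_empty_or_nonempty with rfl | hSne
    · refine ⟨[], by simp, by simp, ?_⟩
      simp only [List.length_nil, Nat.cast_zero]
      positivity
    obtain ⟨U₀, hU₀ac, hU₀⟩ := greedy_step hgnn hac hcov hw hSne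
    set c₀ : ℕ := (S.filter (· ∈ U₀)).card with hc₀
    have hScard1 : 1 ≤ S.card := Finset.card_pos.mpr hSne
    have hc₀1 : 1 ≤ c₀ := by
      rcases Nat.eq_zero_or_pos c₀ with h | h
      · exfalso
        rw [h, Nat.cast_zero, mul_zero] at hU₀
        have h1 : (1:ℝ) ≤ (S.card:ℝ) := by exact_mod_cast hScard1
        linarith
      · exact h
    set S' : Finset W := S.filter (· ∉ U₀) with hS'
    have hS'card : S'.card = S.card - c₀ := by
      rw [hS', hc₀]
      rw [← Finset.card_filter_add_card_filter_not (s := S) (p := (· ∈ U₀))]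
      omega
    have hS'lt : S'.card < S.card := by omega
    have hS'le : S'.card ≤ m := by omega
    obtain ⟨L', hL'ac, hL'cov, hL'len⟩ := ih S' hS'le
    rcases Nat.eq_zero_or_pos S'.card with hz | hpos
    · -- S' empty : one set suffices
      refine ⟨[U₀], by simpa using hU₀ac, ?_, ?_⟩
      · intro v hv
        refine ⟨U₀, by simp, ?_⟩
        by_contra hvn
        have : v ∈ S' := Finset.mem_filter.mpr ⟨hv, hvn⟩
        rw [Finset.card_eq_zero.mp hz] at this
        exact absurd this (Finset.notMem_empty v)
      · simp only [List.length_singleton, Nat.cast_one]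
        have hlog : 0 ≤ Real.log S.card := by
          apply Real.log_nonneg
          exact_mod_cast hScard1
        nlinarith
    · -- recurse
      refine ⟨U₀ :: L', ?_, ?_, ?_⟩
      · intro U hU
        rcases List.mem_cons.mp hU with rfl | hU
        · exact hU₀ac
        · exact hL'ac U hU
      · intro v hv
        by_cases hvU : v ∈ U₀
        · exact ⟨U₀, List.mem_cons_self, hvU⟩
        · obtain ⟨U, hU, hvU'⟩ := hL'cov v (Finset.mem_filter.mpr ⟨hv, hvU⟩)
          exact ⟨U, List.mem_cons_of_mem _ hU, hvU'⟩
      · -- length bound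
        have hlen : ((U₀ :: L').length : ℝ) = 1 + L'.length := by
          simp [add_comm]
        rw [hlen]
        set K : ℝ := (⌈w⌉₊ : ℝ)
        set s : ℝ := (S.card : ℝ) with hsr
        set s' : ℝ := (S'.card : ℝ) with hs'r
        have hs1 : (1:ℝ) ≤ s := by rw [hsr]; exact_mod_cast hScard1
        have hs'1 : (1:ℝ) ≤ s' := by rw [hs'r]; exact_mod_cast hpos
        have hs'pos : (0:ℝ) < s' := lt_of_lt_of_le one_pos hs'1
        have hspos : (0:ℝ) < s := lt_of_lt_of_le one_pos hs1
        -- s' ≤ s (1 - 1/K)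
        have hfrac : s' ≤ s * (1 - 1/K) := by
          have h1 : s / w ≤ (c₀ : ℝ) := by
            rw [div_le_iff₀ hw0]
            calc s ≤ w * (c₀:ℝ) := hU₀
            _ = (c₀:ℝ) * w := mul_comm _ _
          have h2 : s / K ≤ s / w := by
            apply div_le_div_of_nonneg_left (le_of_lt hspos) hw0 hKw
          have hle : c₀ ≤ S.card := by rw [hc₀]; exact Finset.card_filter_le _ _
          have h3 : s' = s - (c₀ : ℝ) := by
            rw [hs'r, hsr, hS'card, Nat.cast_sub hle]
          have : s / K ≤ (c₀:ℝ) := le_trans h2 h1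
          rw [h3]
          have : s - (c₀:ℝ) ≤ s - s / K := by linarith
          calc s - (c₀:ℝ) ≤ s - s / K := this
          _ = s * (1 - 1/K) := by ring
        have h1K : (0:ℝ) < 1 - 1/K := by
          by_contra h
          push_neg at h
          nlinarith
        -- 1 + K (log s' + 1) ≤ K (log s + 1)
        have hlogstep : 1/K ≤ Real.log s - Real.log s' := by
          have hds : Real.log s - Real.log s' = Real.log (s / s') :=
            (Real.log_div (ne_of_gt hspos) (ne_of_gt hs'pos)).symm
          rw [hds]
          have hratio : 1 / (1 - 1/K) ≤ s / s' := by
            rw [div_le_div_iff₀ h1K hs'pos]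
            calc 1 * s' = s' := one_mul s'
            _ ≤ s * (1 - 1/K) := hfrac
            _ = s * (1 - 1/K) := rfl
          have hlog1 : Real.log (1 / (1 - 1/K)) ≤ Real.log (s / s') :=
            Real.log_le_log (by positivity) hratio
          have hlog2 : 1/K ≤ Real.log (1 / (1 - 1/K)) := by
            rw [one_div (1 - 1/K), Real.log_inv]
            have := Real.log_le_sub_one_of_pos h1K
            linarith
          linarith
        have : 1 + K * (Real.log s' + 1) ≤ K * (Real.log s + 1) := by
          have := mul_le_mul_of_nonneg_left hlogstep (le_of_lt hK0)
          rw [mul_one_div, div_self (ne_of_gt hK0)] at this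
          nlinarith
        calc 1 + (L'.length : ℝ) ≤ 1 + K * (Real.log s' + 1) := by linarith
        _ ≤ K * (Real.log s + 1) := this

/-- From a covering list of acyclic sets, a dichromatic colouring. -/
lemma dichromNum_le_list (L : List (Finset W))
    (hac : ∀ U ∈ L, IsAcyclicSet R (↑U : Set W))
    (hcov : ∀ v : W, ∃ U ∈ L, v ∈ U) :
    dichromNum R ≤ L.length := by
  classical
  have hex : ∀ v : W, ∃ i : Fin L.length, v ∈ L.get i := by
    intro v
    obtain ⟨U, hU, hv⟩ := hcov v
    obtain ⟨i, hi⟩ := List.mem_iff_get.mp hU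
    exact ⟨i, hi ▸ hv⟩
  refine dichromNum_le ⟨fun v => (hex v).choose, fun k => ?_⟩
  refine isAcyclicSet_subset ?_ (hac (L.get k) (L.get_mem k))
  intro v hv
  have := (hex v).choose_spec
  simp only [Set.mem_setOf_eq] at hv
  rw [hv] at this
  exact this

end Greedy
section Submul

variable {V : Type*} [Fintype V] [Nonempty V] (E : V → V → Prop)

lemma andPow_ne {t : ℕ} : ∀ x y : Fin t → V, andPow E t x y → x ≠ y := fun _ _ h => h.1

lemma chromNum_andPow_submul (a b : ℕ) :
    chromNum (andPow E (a + b)) ≤ chromNum (andPow E a) * chromNum (andPow E b) := by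
  obtain ⟨ca, hca⟩ := exists_chromColoring (andPow_ne E (t := a))
  obtain ⟨cb, hcb⟩ := exists_chromColoring (andPow_ne E (t := b))
  refine chromNum_le ⟨fun x => finProdFinEquiv
    (ca (fun i => x (Fin.castAdd b i)), cb (fun j => x (Fin.natAdd a j))), ?_⟩
  intro x y hxy hcxy
  have hinj := finProdFinEquiv.injective hcxy
  rw [Prod.mk.injEq] at hinj
  obtain ⟨h1, h2⟩ := hinj
  have hL : (fun i => x (Fin.castAdd b i)) = fun i => y (Fin.castAdd b i) := by
    by_contra hne
    exact hca _ _ ⟨hne, fun i => hxy.2 (Fin.castAdd b i)⟩ h1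
  have hR : (fun j => x (Fin.natAdd a j)) = fun j => y (Fin.natAdd a j) := by
    by_contra hne
    exact hcb _ _ ⟨hne, fun j => hxy.2 (Fin.natAdd a j)⟩ h2
  apply hxy.1
  funext i
  refine Fin.addCases (motive := fun i => x i = y i) ?_ ?_ i
  · exact fun i => congrFun hL i
  · exact fun j => congrFun hR j

end Submul

section Rank

variable {α : Type*}

lemma transGen_exists_seq {R : α → α → Prop} {a b : α} (h : Relation.TransGen R a b) :
    ∃ (m : ℕ) (f : ℕ → α), f 0 = a ∧ f (m + 1) = b ∧ ∀ i ≤ m, R (f i) (f (i + 1)) := by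
  induction h with
  | @single x hr =>
    refine ⟨0, fun i => if i = 0 then a else x, by simp, by simp, ?_⟩
    intro i hi
    interval_cases i
    simpa using hr
  | @tail x y _ hr ih =>
    obtain ⟨m, f, h0, hm, hstep⟩ := ih
    refine ⟨m + 1, fun i => if i ≤ m + 1 then f i else y, by simp [h0],
      by show (if m+1+1 ≤ m+1 then f (m+1+1) else y) = y; rw [if_neg (by omega)], ?_⟩
    intro i hi
    rcases Nat.lt_or_ge i (m + 1) with h | h
    · show R (if i ≤ m + 1 then f i else y) (if i + 1 ≤ m + 1 then f (i+1) else y)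
      rw [if_pos (le_of_lt h), if_pos (show i + 1 ≤ m + 1 from h)]
      exact hstep i (Nat.lt_succ_iff.mp h)
    · have : i = m + 1 := le_antisymm hi h
      subst this
      show R (if m+1 ≤ m+1 then f (m+1) else y) (if m+1+1 ≤ m+1 then f (m+1+1) else y)
      rw [if_pos le_rfl, if_neg (by omega), hm]
      exact hr

lemma not_transGen_self {E : α → α → Prop} {U : Set α} (hU : IsAcyclicSet E U)
    {R : α → α → Prop} (hsub : ∀ x y, R x y → E x y ∧ x ∈ U ∧ y ∈ U) (u : α) :
    ¬ Relation.TransGen R u u := by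
  intro h
  obtain ⟨m, f, h0, hm, hstep⟩ := transGen_exists_seq h
  apply hU
  refine ⟨m, fun i => f i.val, ?_, ?_⟩
  · intro i
    exact (hsub _ _ (hstep i.val (Nat.lt_succ_iff.mp i.isLt))).2.1
  · intro i
    rcases eq_or_ne i (Fin.last m) with rfl | hne
    · have h1 : ((Fin.last m) + 1 : Fin (m + 1)).val = 0 := by
        simp [Fin.val_add_one]
      have h2 : (Fin.last m).val = m := rfl
      show E (f (Fin.last m).val) (f ((Fin.last m + 1 : Fin (m+1)).val))
      rw [h1, h2, h0, ← hm]
      exact (hsub _ _ (hstep m le_rfl)).1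
    · have h1 : ((i + 1) : Fin (m + 1)).val = i.val + 1 := by
        rw [Fin.val_add_one, if_neg hne]
      show E (f i.val) (f ((i + 1 : Fin (m+1)).val))
      rw [h1]
      have hilt : i.val < m := Fin.val_lt_last hne
      exact (hsub _ _ (hstep i.val (le_of_lt hilt))).1

variable [Fintype α] {D : ℕ} (G : α → α → Prop) (c : α → Fin D)

/-- Rank of a vertex within the colour class `k`. -/
noncomputable def rankAux (k : Fin D) (u : α) : ℕ :=
  letI := Classical.dec
  (Finset.univ.filter
    (fun x => Relation.TransGen (fun a b => G a b ∧ c a = k ∧ c b = k) x u)).card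

/-- Rank of a vertex within its own colour class. -/
noncomputable def rank (u : α) : ℕ := rankAux G c (c u) u

variable {G c}

lemma rank_lt_card (hclass : ∀ k, IsAcyclicSet G {v | c v = k}) (u : α) :
    rank G c u < Fintype.card α := by
  classical
  have hu : u ∉ Finset.univ.filter
      (fun x => Relation.TransGen (fun a b => G a b ∧ c a = c u ∧ c b = c u) x u) := by
    simp only [Finset.mem_filter, Finset.mem_univ, true_and]
    exact not_transGen_self (hclass (c u)) (fun x y h => ⟨h.1, h.2.1, h.2.2⟩) u
  have hne : Finset.univ.filter
      (fun x => Relation.TransGen (fun a b => G a b ∧ c a = c u ∧ c b = c u) x u)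
      ≠ Finset.univ := by
    intro h
    rw [h] at hu
    exact hu (Finset.mem_univ u)
  calc rank G c u < Finset.univ.card :=
        Finset.card_lt_card ((Finset.subset_univ _).ssubset_of_ne (by
          convert hne using 2))
  _ = Fintype.card α := Finset.card_univ

lemma rank_lt_rank (hclass : ∀ k, IsAcyclicSet G {v | c v = k}) {u v : α}
    (huv : G u v) (hc : c u = c v) : rank G c u < rank G c v := by
  classical
  set k := c u with hk
  have hcv : c v = k := hc.symm
  set Rk : α → α → Prop := fun a b => G a b ∧ c a = k ∧ c b = k with hRk
  have hRuv : Rk u v := ⟨huv, rfl, hcv⟩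
  have hsubset : Finset.univ.filter (fun x => Relation.TransGen Rk x u)
      ⊆ Finset.univ.filter (fun x => Relation.TransGen Rk x v) := by
    intro x hx
    simp only [Finset.mem_filter, Finset.mem_univ, true_and] at hx ⊢
    exact hx.tail hRuv
  have huB : u ∈ Finset.univ.filter (fun x => Relation.TransGen Rk x v) := by
    simp only [Finset.mem_filter, Finset.mem_univ, true_and]
    exact Relation.TransGen.single hRuv
  have huA : u ∉ Finset.univ.filter (fun x => Relation.TransGen Rk x u) := by
    simp only [Finset.mem_filter, Finset.mem_univ, true_and]
    exact not_transGen_self (hclass k) (fun x y h => ⟨h.1, h.2.1, h.2.2⟩) u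
  have : rank G c u < (Finset.univ.filter (fun x => Relation.TransGen Rk x v)).card := by
    apply Finset.card_lt_card
    rw [Finset.ssubset_iff_of_subset hsubset]
    exact ⟨u, huB, huA⟩
  calc rank G c u < (Finset.univ.filter (fun x => Relation.TransGen Rk x v)).card := this
  _ = rank G c v := by
      rw [rank, rankAux, hcv]

end Rank
section ProductColoring

variable {V : Type*} [Fintype V] [Nonempty V] (E : V → V → Prop)

/-- Key lemma: colouring a double power using a dichromatic colouring of the inner power. -/
lemma chromNum_mul_le (t s : ℕ) :
    chromNum (andPow E (t * s)) ≤
      (dichromNum (andPow E t)) ^ s *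
        (s * (Fintype.card (Fin t → V) - 1) + 1) := by
  classical
  obtain ⟨c, hclass⟩ := exists_dichromColoring (andPow_ne E (t := t))
  -- slices
  set slice : (Fin (t * s) → V) → Fin s → (Fin t → V) :=
    fun x a b => x (finProdFinEquiv (b, a)) with hslice
  have slice_eq : ∀ x y : Fin (t * s) → V, (∀ a, slice x a = slice y a) → x = y := by
    intro x y h
    funext i
    obtain ⟨⟨b, a⟩, rfl⟩ := finProdFinEquiv.surjective i
    exact congrFun (h a) b
  have slice_edge : ∀ x y : Fin (t * s) → V, andPow E (t * s) x y →
      ∀ a, slice x a = slice y a ∨ andPow E t (slice x a) (slice y a) := by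
    intro x y hxy a
    by_cases h : slice x a = slice y a
    · exact Or.inl h
    · exact Or.inr ⟨h, fun b => hxy.2 (finProdFinEquiv (b, a))⟩
  -- the sum of ranks
  have hrank : ∀ u : Fin t → V, rank (andPow E t) c u ≤ Fintype.card (Fin t → V) - 1 := by
    intro u
    have := rank_lt_card hclass u
    omega
  set σ : (Fin (t * s) → V) → ℕ := fun x => ∑ a : Fin s, rank (andPow E t) c (slice x a) with hσ
  have hσlt : ∀ x, σ x < s * (Fintype.card (Fin t → V) - 1) + 1 := by
    intro x
    have : σ x ≤ ∑ _a : Fin s, (Fintype.card (Fin t → V) - 1) :=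
      Finset.sum_le_sum fun a _ => hrank (slice x a)
    simp only [Finset.sum_const, Finset.card_univ, Fintype.card_fin, smul_eq_mul] at this
    omega
  -- target cardinality
  have ecard : Fintype.card ((Fin s → Fin (dichromNum (andPow E t))) × Fin (s * (Fintype.card (Fin t → V) - 1) + 1)) = (dichromNum (andPow E t)) ^ s * (s * (Fintype.card (Fin t → V) - 1) + 1) := by
    simp [Fintype.card_fun]
  refine chromNum_le ⟨fun x => (Fintype.equivFinOfCardEq ecard)
    (fun a => c (slice x a), (⟨σ x, hσlt x⟩ : Fin (s * (Fintype.card (Fin t → V) - 1) + 1))), ?_⟩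
  intro x y hxy hcol
  have := (Fintype.equivFinOfCardEq ecard).injective hcol
  rw [Prod.mk.injEq] at this
  obtain ⟨h1, h2⟩ := this
  have hcc : ∀ a, c (slice x a) = c (slice y a) := fun a => congrFun h1 a
  have hle : ∀ a, rank (andPow E t) c (slice x a) ≤ rank (andPow E t) c (slice y a) := by
    intro a
    rcases slice_edge x y hxy a with h | h
    · rw [h]
    · exact le_of_lt (rank_lt_rank hclass h (hcc a))
  have hstrict : ∃ a, rank (andPow E t) c (slice x a) < rank (andPow E t) c (slice y a) := by
    by_contra hno
    push_neg at hno
    apply hxy.1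
    apply slice_eq
    intro a
    rcases slice_edge x y hxy a with h | h
    · exact h
    · exact absurd (rank_lt_rank hclass h (hcc a)) (not_lt.mpr (hno a))
  obtain ⟨a₀, ha₀⟩ := hstrict
  have : σ x < σ y := by
    rw [hσ]
    exact Finset.sum_lt_sum (fun a _ => hle a) ⟨a₀, Finset.mem_univ a₀, ha₀⟩
  have h2' : σ x = σ y := by
    have := congrArg Fin.val h2
    simpa using this
  omega

end ProductColoring
set_option maxHeartbeats 1000000 in
/-- lim χ_{dir,f}(F^{∧t})^{1/t} exists and equals r_D(F). -/
theorem stmt11 {V : Type*} [Fintype V] [Nonempty V]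
    (E : V → V → Prop) (hE : ∀ v, ¬ E v v) :
    ∃ r : ℝ,
      Tendsto (fun t : ℕ => (chromNum (andPow E t) : ℝ) ^ (1 / (t : ℝ))) atTop (nhds r) ∧
      Tendsto (fun t : ℕ => (fracDichromNum (andPow E t)) ^ (1 / (t : ℝ))) atTop (nhds r) := by
  classical
  set n : ℕ := Fintype.card V with hn
  have hn1 : 1 ≤ n := Fintype.card_pos
  have hlogn : 0 ≤ Real.log n := Real.log_nonneg (by exact_mod_cast hn1)
  set χ : ℕ → ℕ := fun t => chromNum (andPow E t) with hχdef
  have hχ1 : ∀ t, 1 ≤ χ t := fun t => one_le_chromNum (andPow_ne E)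
  have hχr : ∀ t, (0:ℝ) < (χ t : ℝ) := fun t => by exact_mod_cast hχ1 t
  have hNcard : ∀ t : ℕ, Fintype.card (Fin t → V) = n ^ t := fun t => by
    simp [Fintype.card_fun, hn]
  -- Fekete
  set u : ℕ → ℝ := fun t => Real.log (χ t) with hudef
  have hu0 : ∀ t, 0 ≤ u t := fun t => Real.log_nonneg (by exact_mod_cast hχ1 t)
  have hsub : Subadditive u := by
    intro a b
    have h1 : χ (a + b) ≤ χ a * χ b := chromNum_andPow_submul E a b
    have h2 : (χ (a+b) : ℝ) ≤ (χ a : ℝ) * (χ b : ℝ) := by exact_mod_cast h1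
    calc u (a + b) ≤ Real.log ((χ a : ℝ) * (χ b : ℝ)) := Real.log_le_log (hχr _) h2
    _ = u a + u b := Real.log_mul (ne_of_gt (hχr a)) (ne_of_gt (hχr b))
  have hbdd : BddBelow (Set.range fun t : ℕ => u t / t) := by
    refine ⟨0, ?_⟩
    rintro x ⟨t, rfl⟩
    exact div_nonneg (hu0 t) (Nat.cast_nonneg t)
  set L := hsub.lim with hL
  set r := Real.exp L with hr
  have hr0 : (0:ℝ) < r := Real.exp_pos L
  have htendu : Tendsto (fun t : ℕ => u t / t) atTop (nhds L) := hsub.tendsto_lim hbdd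
  have htend1 : Tendsto (fun t : ℕ => (χ t : ℝ) ^ (1 / (t : ℝ))) atTop (nhds r) := by
    have h1 : Tendsto (fun t : ℕ => Real.exp (u t / t)) atTop (nhds r) := by
      rw [hr]
      exact (Real.continuous_exp.tendsto L).comp htendu
    refine h1.congr' ?_
    filter_upwards with t
    rw [Real.rpow_def_of_pos (hχr t), mul_one_div]
  -- r^m ≤ χ m for m ≠ 0
  have hrpow : ∀ m : ℕ, m ≠ 0 → r ^ m ≤ (χ m : ℝ) := by
    intro m hm
    have h1 : L ≤ u m / m := hsub.lim_le_div hbdd hm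
    have hm0 : (0:ℝ) < (m:ℝ) := by exact_mod_cast Nat.pos_of_ne_zero hm
    have h2 : (m:ℝ) * L ≤ u m := by
      rw [div_eq_mul_inv] at h1
      calc (m:ℝ) * L ≤ (m:ℝ) * (u m * (m:ℝ)⁻¹) := by
            apply mul_le_mul_of_nonneg_left h1 (le_of_lt hm0)
      _ = u m := by field_simp
    calc r ^ m = Real.exp ((m:ℝ) * L) := by rw [hr, Real.exp_nat_mul]
    _ ≤ Real.exp (u m) := Real.exp_le_exp.mpr h2
    _ = (χ m : ℝ) := Real.exp_log (hχr m)
  refine ⟨r, htend1, ?_⟩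
  -- Key lower bound on the fractional dichromatic number
  have hkey : ∀ t : ℕ, t ≠ 0 →
      r ^ t ≤ fracDichromNum (andPow E t) * (2 * ((t:ℝ) * Real.log n + 1)) := by
    intro t ht
    set Mt : ℝ := 2 * ((t:ℝ) * Real.log n + 1) with hMt
    have hMt2 : (2:ℝ) ≤ Mt := by
      rw [hMt]
      nlinarith [mul_nonneg (Nat.cast_nonneg t : (0:ℝ) ≤ t) hlogn]
    have hMt0 : (0:ℝ) < Mt := by linarith
    have hmain : ∀ w ∈ fracSet (andPow E t), r ^ t / Mt ≤ w := by
      intro w hwmem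
      have hw1 : (1:ℝ) ≤ w := one_le_of_mem_fracSet hwmem
      letI : DecidableEq (Fin t → V) := Classical.decEq _
      obtain ⟨g, hgnn, hgac, hgcov, hgw⟩ := hwmem
      -- greedy gives a dichromatic colouring
      have hK2w : ((⌈w⌉₊ : ℝ)) ≤ 2 * w := by
        have := Nat.ceil_lt_add_one (le_trans zero_le_one hw1)
        linarith
      obtain ⟨Lst, hLac, hLcov, hLlen⟩ := greedy_cover hgnn hgac hgcov hgw hw1
        (Finset.univ.card) Finset.univ le_rfl
      have hD : dichromNum (andPow E t) ≤ Lst.length :=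
        dichromNum_le_list Lst hLac (fun v => hLcov v (Finset.mem_univ v))
      have hlogcard : Real.log ((Finset.univ : Finset (Fin t → V)).card) =
          (t:ℝ) * Real.log n := by
        rw [Finset.card_univ, hNcard t]
        push_cast
        rw [Real.log_pow]
      have hDr : (dichromNum (andPow E t) : ℝ) ≤ w * Mt := by
        calc (dichromNum (andPow E t) : ℝ) ≤ (Lst.length : ℝ) := by exact_mod_cast hD
        _ ≤ (⌈w⌉₊ : ℝ) * (Real.log ((Finset.univ : Finset (Fin t → V)).card) + 1) := hLlen
        _ ≤ (2 * w) * ((t:ℝ) * Real.log n + 1) := by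
            rw [hlogcard]
            apply mul_le_mul_of_nonneg_right hK2w
            nlinarith [mul_nonneg (Nat.cast_nonneg t : (0:ℝ) ≤ t) hlogn]
        _ = w * Mt := by rw [hMt]; ring
      -- r ^ t ≤ dichromNum (andPow E t)
      have hrD : r ^ t ≤ (dichromNum (andPow E t) : ℝ) := by
        by_contra hcon
        push_neg at hcon
        set A : ℝ := (dichromNum (andPow E t) : ℝ) with hA
        have hA1 : (1:ℝ) ≤ A := by
          rw [hA]
          exact_mod_cast one_le_dichromNum (andPow_ne E (t := t))
        have hA0 : (0:ℝ) < A := lt_of_lt_of_le one_pos hA1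
        set N : ℕ := Fintype.card (Fin t → V) with hNd
        have hN1 : 1 ≤ N := Fintype.card_pos
        -- the double power inequality
        have hsN : ∀ s : ℕ, 1 ≤ s → (r ^ t) ^ s ≤ A ^ s * ((s : ℝ) * (N : ℝ)) := by
          intro s hs
          have hts : t * s ≠ 0 := Nat.mul_ne_zero ht (by omega)
          have h1 : r ^ (t * s) ≤ (χ (t * s) : ℝ) := hrpow _ hts
          have h2 : χ (t * s) ≤ (dichromNum (andPow E t)) ^ s * (s * (N - 1) + 1) :=
            chromNum_mul_le E t s
          have h3 : s * (N - 1) + 1 ≤ s * N := by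
            have hNe : N = (N - 1) + 1 := by omega
            calc s * (N - 1) + 1 ≤ s * (N - 1) + s := by omega
            _ = s * ((N - 1) + 1) := by ring
            _ = s * N := by rw [← hNe]
          have h4 : (χ (t*s) : ℝ) ≤ A ^ s * ((s:ℝ) * (N:ℝ)) := by
            have h5 : χ (t*s) ≤ (dichromNum (andPow E t)) ^ s * (s * N) :=
              le_trans h2 (Nat.mul_le_mul_left _ h3)
            rw [hA]
            exact_mod_cast h5
          calc (r ^ t) ^ s = r ^ (t * s) := by rw [← pow_mul]
          _ ≤ (χ (t * s) : ℝ) := h1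
          _ ≤ A ^ s * ((s:ℝ) * (N:ℝ)) := h4
        -- contradiction via growth
        set q : ℝ := r ^ t / A with hq
        have hq1 : 1 < q := by
          rw [hq]
          rw [lt_div_iff₀ hA0]
          simpa using hcon
        set p : ℝ := Real.sqrt q with hp
        have hq0 : (0:ℝ) ≤ q := le_trans zero_le_one (le_of_lt hq1)
        have hp1 : 1 < p := by
          rw [hp]
          have := Real.sqrt_lt_sqrt (zero_le_one) hq1
          simpa using this
        have hp0 : (0:ℝ) < p - 1 := by linarith
        obtain ⟨s₀, hs₀⟩ := exists_nat_gt ((N : ℝ) / (p - 1)^2)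
        set s := s₀ + 1 with hs
        have hs1 : 1 ≤ s := Nat.le_add_left 1 s₀
        have hsgt : (N : ℝ) / (p - 1)^2 < (s:ℝ) := by
          calc (N : ℝ) / (p - 1)^2 < (s₀ : ℝ) := hs₀
          _ ≤ (s : ℝ) := by exact_mod_cast Nat.le_succ s₀
        have hqs : q ^ s ≤ (s : ℝ) * N := by
          have h1 := hsN s hs1
          have h2 : q ^ s = (r ^ t) ^ s / A ^ s := div_pow _ _ s
          rw [h2, div_le_iff₀ (pow_pos hA0 s)]
          calc (r ^ t) ^ s ≤ A ^ s * ((s:ℝ) * N) := h1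
          _ = (s:ℝ) * N * A ^ s := by ring
        have hp2 : p ^ 2 = q := Real.sq_sqrt hq0
        have hqp : q ^ s = (p ^ s) ^ 2 := by
          rw [← hp2, ← pow_mul, ← pow_mul, mul_comm 2 s]
        have hps : (1 + (s:ℝ) * (p - 1)) ≤ p ^ s := by
          have := one_add_mul_le_pow (by linarith : (-2:ℝ) ≤ p - 1) s
          simpa using this
        have hcontr : (s:ℝ) * ((s:ℝ) * (p-1)^2) ≤ (s:ℝ) * N := by
          calc (s:ℝ) * ((s:ℝ) * (p-1)^2) = ((s:ℝ) * (p-1))^2 := by ring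
          _ ≤ (1 + (s:ℝ) * (p - 1))^2 := by
              have h1 : (0:ℝ) ≤ (s:ℝ) * (p-1) := mul_nonneg (Nat.cast_nonneg s) (le_of_lt hp0)
              nlinarith
          _ ≤ (p ^ s) ^ 2 := by
              have h1 : (0:ℝ) ≤ 1 + (s:ℝ) * (p - 1) := by
                have := mul_nonneg (Nat.cast_nonneg s : (0:ℝ) ≤ s) (le_of_lt hp0)
                linarith
              nlinarith [hps]
          _ = q ^ s := hqp.symm
          _ ≤ (s:ℝ) * N := hqs
        have hspos : (0:ℝ) < (s:ℝ) := by exact_mod_cast hs1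
        have : (s:ℝ) * (p-1)^2 ≤ (N:ℝ) := le_of_mul_le_mul_left hcontr hspos
        have : (N:ℝ) < (s:ℝ) * (p-1)^2 := by
          rw [div_lt_iff₀ (pow_pos hp0 2)] at hsgt
          linarith
        linarith
      rw [div_le_iff₀ hMt0]
      exact le_trans hrD hDr
    have hsinf : r ^ t / Mt ≤ fracDichromNum (andPow E t) := by
      rw [fracDichromNum_eq]
      exact le_csInf (fracSet_nonempty (andPow_ne E)) hmain
    exact (div_le_iff₀ hMt0).mp hsinf
  -- assemble the second limit by squeezing
  set f : ℕ → ℝ := fun t => fracDichromNum (andPow E t) with hf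
  have hf1 : ∀ t, (1:ℝ) ≤ f t := fun t => one_le_fracDichromNum (andPow_ne E)
  have hfupper : ∀ t : ℕ, f t ^ (1/(t:ℝ)) ≤ (χ t : ℝ) ^ (1/(t:ℝ)) := fun t =>
    Real.rpow_le_rpow (le_trans zero_le_one (hf1 t))
      (fracDichromNum_le_chromNum (andPow_ne E)) (by positivity)
  set Mt : ℕ → ℝ := fun t => 2 * ((t:ℝ) * Real.log n + 1) with hMtd
  have hMt2 : ∀ t, (2:ℝ) ≤ Mt t := by
    intro t
    have h := mul_nonneg (Nat.cast_nonneg t : (0:ℝ) ≤ t) hlogn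
    show (2:ℝ) ≤ 2 * ((t:ℝ) * Real.log n + 1)
    nlinarith
  have hMt0 : ∀ t, (0:ℝ) < Mt t := fun t => by linarith [hMt2 t]
  have hflower : ∀ t : ℕ, t ≠ 0 → r / (Mt t) ^ (1/(t:ℝ)) ≤ f t ^ (1/(t:ℝ)) := by
    intro t ht
    have h1 : r ^ t / Mt t ≤ f t := (div_le_iff₀ (hMt0 t)).mpr (hkey t ht)
    have h2 : (r ^ t / Mt t) ^ (1/(t:ℝ)) ≤ f t ^ (1/(t:ℝ)) :=
      Real.rpow_le_rpow (by positivity) h1 (by positivity)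
    have h3 : (r ^ t / Mt t) ^ (1/(t:ℝ)) = r / (Mt t) ^ (1/(t:ℝ)) := by
      rw [Real.div_rpow (by positivity) (le_of_lt (hMt0 t))]
      congr 1
      rw [← Real.rpow_natCast r t, ← Real.rpow_mul (le_of_lt hr0), mul_one_div,
        div_self (by exact_mod_cast ht : (t:ℝ) ≠ 0), Real.rpow_one]
    rw [← h3]
    exact h2
  have hlog0 : Tendsto (fun t : ℕ => Real.log (Mt t) / t) atTop (nhds 0) := by
    set C : ℝ := 2 * Real.log n + 2 with hC
    have hC0 : (0:ℝ) < C := by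
      show (0:ℝ) < 2 * Real.log (n:ℝ) + 2
      linarith
    have hsqrtC : (0:ℝ) ≤ Real.sqrt C := Real.sqrt_nonneg C
    have hsq : Tendsto (fun t : ℕ => Real.sqrt (t:ℝ)) atTop atTop := by
      have h1 : Tendsto (fun x : ℝ => Real.sqrt x) atTop atTop := by
        have : (fun x : ℝ => Real.sqrt x) = fun x : ℝ => x ^ ((1:ℝ)/2) := by
          funext x; exact Real.sqrt_eq_rpow x
        rw [this]
        exact tendsto_rpow_atTop (by norm_num)
      exact h1.comp tendsto_natCast_atTop_atTop
    have hg0 : Tendsto (fun t : ℕ => 2 * Real.sqrt C / Real.sqrt (t:ℝ)) atTop (nhds 0) :=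
      tendsto_const_nhds.div_atTop hsq
    apply squeeze_zero' ?_ ?_ hg0
    · filter_upwards [eventually_ge_atTop 1] with t ht
      exact div_nonneg (Real.log_nonneg (by linarith [hMt2 t])) (Nat.cast_nonneg t)
    · filter_upwards [eventually_ge_atTop 1] with t ht
      have htr : (1:ℝ) ≤ (t:ℝ) := by exact_mod_cast ht
      have ht0 : (0:ℝ) < (t:ℝ) := by linarith
      have hMC : Mt t ≤ C * t := by
        show 2 * ((t:ℝ) * Real.log n + 1) ≤ (2 * Real.log n + 2) * t
        nlinarith [hlogn, htr]
      have hlM : Real.log (Mt t) ≤ 2 * Real.sqrt (C * t) := by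
        have h1 : Real.log (Mt t) = 2 * Real.log (Real.sqrt (Mt t)) := by
          rw [Real.log_sqrt (le_of_lt (hMt0 t))]; ring
        have h2 : Real.log (Real.sqrt (Mt t)) ≤ Real.sqrt (Mt t) - 1 :=
          Real.log_le_sub_one_of_pos (Real.sqrt_pos.mpr (hMt0 t))
        have h3 : Real.sqrt (Mt t) ≤ Real.sqrt (C * t) := Real.sqrt_le_sqrt hMC
        linarith
      have hst : Real.sqrt (C * (t:ℝ)) = Real.sqrt C * Real.sqrt (t:ℝ) :=
        Real.sqrt_mul (le_of_lt hC0) _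
      have hsqt0 : (0:ℝ) < Real.sqrt (t:ℝ) := Real.sqrt_pos.mpr ht0
      have htsq : (t:ℝ) = Real.sqrt (t:ℝ) * Real.sqrt (t:ℝ) :=
        (Real.mul_self_sqrt (le_of_lt ht0)).symm
      calc Real.log (Mt t) / (t:ℝ) ≤ 2 * Real.sqrt (C * t) / (t:ℝ) :=
            (div_le_div_iff_of_pos_right ht0).mpr hlM
      _ = 2 * Real.sqrt C / Real.sqrt (t:ℝ) := by
          rw [hst, div_eq_div_iff (ne_of_gt ht0) (ne_of_gt hsqt0)]
          linear_combination (-2 * Real.sqrt C) * htsq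
  have hMtend : Tendsto (fun t : ℕ => (Mt t) ^ (1/(t:ℝ))) atTop (nhds 1) := by
    have h1 : Tendsto (fun t : ℕ => Real.exp (Real.log (Mt t) / t)) atTop (nhds 1) := by
      have := (Real.continuous_exp.tendsto 0).comp hlog0
      rw [Real.exp_zero] at this
      exact this
    refine h1.congr fun t => ?_
    rw [Real.rpow_def_of_pos (hMt0 t), mul_one_div]
  have hlowtend : Tendsto (fun t : ℕ => r / (Mt t) ^ (1/(t:ℝ))) atTop (nhds r) := by
    have := (tendsto_const_nhds : Tendsto (fun _ : ℕ => r) atTop (nhds r)).div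
      hMtend one_ne_zero
    rw [div_one] at this
    exact this
  refine tendsto_of_tendsto_of_tendsto_of_le_of_le' hlowtend htend1 ?_ ?_
  · filter_upwards [eventually_ge_atTop 1] with t ht
    exact hflower t (by omega)
  · filter_upwards with t
    exact hfupper t
end

section
/- For any digraph G, r_D(G) ≤ χ_{dir,f}(G), i.e., lim_{t→∞} χ(G^{∧t})^{1/t} is at most the fractional dichromatic number of G. -/
open Filter

section StmtAux
open Filter Relation

variable {V : Type*}

private lemma transGen_walk' {E' : V → V → Prop} {a b : V} (h : TransGen E' a b) :
    ∃ (k : ℕ) (f : ℕ → V), 0 < k ∧ f 0 = a ∧ f k = b ∧ ∀ i < k, E' (f i) (f (i + 1)) := by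
  induction h with
  | single hab =>
    rename_i c
    refine ⟨1, fun i => if i = 0 then a else c, one_pos, by simp, by simp, ?_⟩
    intro i hi
    interval_cases i
    simpa using hab
  | tail hbc hcd ih =>
    rename_i c d
    obtain ⟨k, f, hk, h0, hkb, hstep⟩ := ih
    refine ⟨k + 1, fun i => if i ≤ k then f i else d, Nat.succ_pos k, ?_, ?_, ?_⟩
    · simp [h0]
    · simp
    · intro i hi
      rcases Nat.lt_or_ge i k with hik | hik
      · simpa [hik.le, Nat.succ_le_of_lt hik] using hstep i hik
      · have : i = k := le_antisymm (Nat.lt_succ_iff.mp hi) hik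
        subst this
        simpa [hkb] using hcd

private lemma acyclic_irrefl' {E : V → V → Prop} {U : Set V}
    (hU : IsAcyclicSet E U) (a : V) :
    ¬ TransGen (fun x y => x ∈ U ∧ y ∈ U ∧ E x y) a a := by
  intro h
  obtain ⟨k, f, hk, h0, hkb, hstep⟩ := transGen_walk' h
  apply hU
  obtain ⟨n, rfl⟩ : ∃ n, k = n + 1 := ⟨k - 1, (Nat.succ_pred_eq_of_pos hk).symm⟩
  refine ⟨n, fun i => f i.val, ?_, ?_⟩
  · intro i
    exact (hstep i.val i.isLt).1
  · intro i
    rcases eq_or_ne i (Fin.last n) with rfl | hne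
    · have h1 : ((Fin.last n) + 1 : Fin (n + 1)).val = 0 := by simp
      have := (hstep n (Nat.lt_succ_self n)).2.2
      simpa [h1, Fin.val_last, hkb, h0] using this
    · have h1 : ((i + 1 : Fin (n + 1))).val = i.val + 1 := by
        rw [Fin.val_add_one]
        simp [hne]
      have := (hstep i.val i.isLt).2.2
      simpa [h1] using this

private lemma exists_rank' [Fintype V] {E : V → V → Prop} {U : Finset V}
    (hU : IsAcyclicSet E (↑U : Set V)) :
    ∃ r : V → ℕ, (∀ v, r v ≤ Fintype.card V) ∧
      ∀ a ∈ U, ∀ b ∈ U, E a b → r a < r b := by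
  classical
  set E' : V → V → Prop := fun x y => x ∈ (↑U : Set V) ∧ y ∈ (↑U : Set V) ∧ E x y with hE'
  refine ⟨fun v => (Finset.univ.filter (fun x => ReflTransGen E' x v)).card, ?_, ?_⟩
  · intro v
    exact (Finset.card_filter_le _ _).trans_eq Finset.card_univ
  · intro a ha b hb hab
    have hab' : E' a b := ⟨by simpa using ha, by simpa using hb, hab⟩
    apply Finset.card_lt_card
    rw [Finset.ssubset_iff_of_subset]
    · refine ⟨b, ?_, ?_⟩
      · simp [ReflTransGen.refl]
      · simp only [Finset.mem_filter, Finset.mem_univ, true_and]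
        intro hba
        exact acyclic_irrefl' hU b (Relation.TransGen.tail' hba hab')
    · intro x hx
      simp only [Finset.mem_filter, Finset.mem_univ, true_and] at hx ⊢
      exact hx.tail hab'

private lemma chromNum_le' {W : Type*} (F : W → W → Prop) {n : ℕ}
    (c : W → Fin n) (hc : ∀ u v, F u v → c u ≠ c v) : chromNum F ≤ n :=
  Nat.sInf_le ⟨c, hc⟩

private lemma exists_chrom_coloring' {W : Type*} [Fintype W] (F : W → W → Prop)
    (hne : ∀ u v, F u v → u ≠ v) :
    ∃ c : W → Fin (chromNum F), ∀ u v : W, F u v → c u ≠ c v := by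
  have hne2 : {n : ℕ | ∃ c : W → Fin n, ∀ u v : W, F u v → c u ≠ c v}.Nonempty :=
    ⟨Fintype.card W, Fintype.equivFin W, fun u v huv h =>
      hne u v huv ((Fintype.equivFin W).injective h)⟩
  exact Nat.sInf_mem hne2

private lemma one_le_chromNum' {W : Type*} [Fintype W] [Nonempty W] (F : W → W → Prop)
    (hne : ∀ u v, F u v → u ≠ v) : 1 ≤ chromNum F := by
  rcases Nat.eq_zero_or_pos (chromNum F) with h | h
  · obtain ⟨c, -⟩ := exists_chrom_coloring' F hne
    rw [h] at c
    exact (c (Classical.arbitrary W)).elim0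
  · exact h

private lemma chromNum_andPow_submul' [Fintype V] [Nonempty V] (E : V → V → Prop) (s t : ℕ) :
    chromNum (andPow E (s + t)) ≤ chromNum (andPow E s) * chromNum (andPow E t) := by
  obtain ⟨c1, hc1⟩ := exists_chrom_coloring' (andPow E s) (fun _ _ h => h.1)
  obtain ⟨c2, hc2⟩ := exists_chrom_coloring' (andPow E t) (fun _ _ h => h.1)
  refine chromNum_le' _ (fun x => finProdFinEquiv
      (c1 (fun i => x (Fin.castAdd t i)), c2 (fun i => x (Fin.natAdd s i)))) ?_
  rintro x y ⟨hne, hco⟩ heq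
  have heq' := finProdFinEquiv.injective heq
  have h1 := congrArg Prod.fst heq'
  have h2 := congrArg Prod.snd heq'
  simp only at h1 h2
  by_cases hx1 : (fun i => x (Fin.castAdd t i)) = fun i => y (Fin.castAdd t i)
  · have hx2 : (fun i => x (Fin.natAdd s i)) ≠ fun i => y (Fin.natAdd s i) := by
      intro hx2
      apply hne
      funext i
      refine Fin.addCases (fun j => ?_) (fun j => ?_) i
      · exact congrFun hx1 j
      · exact congrFun hx2 j
    exact hc2 _ _ ⟨hx2, fun i => hco (Fin.natAdd s i)⟩ h2
  · exact hc1 _ _ ⟨hx1, fun i => hco (Fin.castAdd t i)⟩ h1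

set_option linter.unusedSectionVars false

section cover
variable [Fintype V] [Nonempty V] [DecidableEq V]
variable (E : V → V → Prop) (g : Finset V → ℝ) (w : ℝ)
  (hg0 : ∀ U, 0 ≤ g U)
  (hgacyc : ∀ U : Finset V, ¬ IsAcyclicSet E (↑U : Set V) → g U = 0)
  (hgcov : ∀ v : V, 1 ≤ ∑ U : Finset V, (if v ∈ U then g U else 0))
  (hw : w = ∑ U : Finset V, g U)

include hg0 hgacyc hgcov hw

private lemma select_step' (t : ℕ) (S : Finset (Fin t → V)) :
    ∃ u : Fin t → Finset V, (∀ i, IsAcyclicSet E (↑(u i) : Set V)) ∧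
      (S.card : ℝ) ≤ w ^ t * ((S.filter (fun x => ∀ i, x i ∈ u i)).card : ℝ) := by
  classical
  set F : (Fin t → Finset V) → ℝ := fun u => ∏ i, g (u i) with hF
  have hF0 : ∀ u, 0 ≤ F u := fun u => Finset.prod_nonneg (fun i _ => hg0 (u i))
  set cnt : (Fin t → Finset V) → ℝ :=
    fun u => ((S.filter (fun x => ∀ i, x i ∈ u i)).card : ℝ) with hcnt
  have hcnt0 : ∀ u, 0 ≤ cnt u := fun u => Nat.cast_nonneg _
  have hsumF : ∑ u : Fin t → Finset V, F u = w ^ t := by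
    have h := Finset.prod_univ_sum (fun _ : Fin t => (Finset.univ : Finset (Finset V))) (fun _ U => g U)
    simp only [Fintype.piFinset_univ] at h
    rw [hw]
    calc ∑ u : Fin t → Finset V, F u = ∏ _i : Fin t, ∑ U : Finset V, g U := h.symm
      _ = (∑ U : Finset V, g U) ^ t := by simp
  have hkey : (S.card : ℝ) ≤ ∑ u : Fin t → Finset V, F u * cnt u := by
    have hswap : ∑ u : Fin t → Finset V, F u * cnt u
        = ∑ x ∈ S, ∏ i, (∑ U : Finset V, if x i ∈ U then g U else 0) := by
      have h1 : ∀ u : Fin t → Finset V, F u * cnt u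
          = ∑ x ∈ S, ∏ i, (if x i ∈ u i then g (u i) else 0) := by
        intro u
        simp only [hcnt]
        rw [Finset.card_filter]
        push_cast
        rw [Finset.mul_sum]
        refine Finset.sum_congr rfl (fun x hx => ?_)
        have hb : (if ∀ i, x i ∈ u i then (1:ℝ) else 0)
            = ∏ i : Fin t, (if x i ∈ u i then (1:ℝ) else 0) := by
          rw [Finset.prod_boole]
          simp
        rw [hb, hF, ← Finset.prod_mul_distrib]
        refine Finset.prod_congr rfl (fun i _ => ?_)
        split <;> simp
      rw [Finset.sum_congr rfl (fun u _ => h1 u), Finset.sum_comm]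
      refine Finset.sum_congr rfl (fun x hx => ?_)
      rw [Finset.prod_univ_sum (fun _ => Finset.univ) (fun i U => if x i ∈ U then g U else 0)]
      rw [show (Finset.univ : Finset (Fin t → Finset V)) = Fintype.piFinset (fun _ => Finset.univ) from (Fintype.piFinset_univ).symm]
    rw [hswap]
    calc (S.card : ℝ) = ∑ x ∈ S, (1 : ℝ) := by simp
    _ ≤ _ := by
        refine Finset.sum_le_sum (fun x hx => ?_)
        calc (1:ℝ) = ∏ i : Fin t, (1:ℝ) := by simp
        _ ≤ _ := Finset.prod_le_prod (by simp) (fun i _ => hgcov (x i))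
  have hw1 : (1:ℝ) ≤ w := by
    rw [hw]
    refine (hgcov (Classical.arbitrary V)).trans (Finset.sum_le_sum (fun U _ => ?_))
    split
    · exact le_rfl
    · exact hg0 U
  have hwt : (0:ℝ) < w ^ t := pow_pos (lt_of_lt_of_le one_pos hw1) t
  by_contra hcon
  push_neg at hcon
  have hptwise : ∀ u : Fin t → Finset V, F u * cnt u ≤ F u * ((S.card : ℝ) / w ^ t) := by
    intro u
    rcases eq_or_lt_of_le (hF0 u) with h0 | h0
    · rw [← h0, zero_mul, zero_mul]
    · have hacyc : ∀ i, IsAcyclicSet E (↑(u i) : Set V) := by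
        intro i
        by_contra hi
        have := hgacyc (u i) hi
        have : F u = 0 := Finset.prod_eq_zero (Finset.mem_univ i) this
        exact absurd this h0.ne'
      have := hcon u hacyc
      exact mul_le_mul_of_nonneg_left ((le_div_iff₀ hwt).mpr (by linarith)) (hF0 u)
  have hex : ∃ u : Fin t → Finset V, F u ≠ 0 := by
    by_contra hall
    push_neg at hall
    rw [Finset.sum_eq_zero (fun u _ => hall u)] at hsumF
    linarith
  obtain ⟨u0, hu0⟩ := hex
  have h0' : 0 < F u0 := lt_of_le_of_ne (hF0 u0) (Ne.symm hu0)
  have hacyc0 : ∀ i, IsAcyclicSet E (↑(u0 i) : Set V) := by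
    intro i
    by_contra hi
    exact hu0 (Finset.prod_eq_zero (Finset.mem_univ i) (hgacyc (u0 i) hi))
  have hstrict : F u0 * cnt u0 < F u0 * ((S.card : ℝ) / w ^ t) := by
    have := hcon u0 hacyc0
    exact mul_lt_mul_of_pos_left ((lt_div_iff₀ hwt).mpr (by linarith)) h0'
  have : ∑ u : Fin t → Finset V, F u * cnt u < ∑ u : Fin t → Finset V, F u * ((S.card : ℝ) / w ^ t) :=
    Finset.sum_lt_sum (fun u _ => hptwise u) ⟨u0, Finset.mem_univ u0, hstrict⟩
  rw [← Finset.sum_mul, hsumF] at this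
  rw [mul_div_cancel₀ _ hwt.ne'] at this
  linarith

private lemma one_le_w' : (1:ℝ) ≤ w := by
  rw [hw]
  refine (hgcov (Classical.arbitrary V)).trans (Finset.sum_le_sum (fun U _ => ?_))
  split
  · exact le_rfl
  · exact hg0 U

private lemma greedy_cover' (t : ℕ) : ∀ (k : ℕ) (S : Finset (Fin t → V)),
    (S.card : ℝ) * (1 - 1 / w ^ t) ^ k < 1 →
    ∃ u : Fin k → Fin t → Finset V,
      (∀ j i, IsAcyclicSet E (↑(u j i) : Set V)) ∧
      ∀ x ∈ S, ∃ j, ∀ i, x i ∈ u j i := by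
  classical
  have hw1 := one_le_w' E g w hg0 hgacyc hgcov hw
  have hwt : (0:ℝ) < w ^ t := pow_pos (by linarith) t
  have hq1 : 1 / w ^ t ≤ 1 := by
    rw [div_le_one hwt]
    exact one_le_pow₀ hw1
  intro k
  induction k with
  | zero =>
    intro S hS
    simp only [pow_zero, mul_one] at hS
    have : S.card = 0 := by exact_mod_cast Nat.lt_one_iff.mp (by exact_mod_cast hS)
    refine ⟨fun j => j.elim0, fun j => j.elim0, fun x hx => ?_⟩
    simp [Finset.card_eq_zero.mp this] at hx
  | succ k ih =>
    intro S hS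
    obtain ⟨u0, hu0acyc, hu0⟩ := select_step' E g w hg0 hgacyc hgcov hw t S
    set S' := S.filter (fun x => ¬ ∀ i, x i ∈ u0 i) with hS'
    have hcard : (S'.card : ℝ) ≤ (S.card : ℝ) * (1 - 1 / w ^ t) := by
      have hsplit : (S.filter (fun x => ∀ i, x i ∈ u0 i)).card + S'.card = S.card :=
        Finset.card_filter_add_card_filter_not _
      have h1 : (S.card : ℝ) / w ^ t ≤ ((S.filter (fun x => ∀ i, x i ∈ u0 i)).card : ℝ) := by
        rw [div_le_iff₀ hwt]
        linarith [hu0]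
      have h2 : (S'.card : ℝ) = (S.card : ℝ) - ((S.filter (fun x => ∀ i, x i ∈ u0 i)).card : ℝ) := by
        have := congrArg (Nat.cast : ℕ → ℝ) hsplit
        push_cast at this
        linarith
      rw [h2, mul_sub, mul_one, mul_one_div]
      linarith
    have hS'lt : (S'.card : ℝ) * (1 - 1 / w ^ t) ^ k < 1 := by
      calc (S'.card : ℝ) * (1 - 1 / w ^ t) ^ k
          ≤ (S.card : ℝ) * (1 - 1 / w ^ t) * (1 - 1 / w ^ t) ^ k := by
            refine mul_le_mul_of_nonneg_right hcard (pow_nonneg (by linarith) k)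
        _ = (S.card : ℝ) * (1 - 1 / w ^ t) ^ (k + 1) := by ring
        _ < 1 := hS
    obtain ⟨u', hu'acyc, hu'⟩ := ih S' hS'lt
    refine ⟨Fin.cons u0 u', ?_, ?_⟩
    · intro j i
      refine Fin.cases ?_ ?_ j
      · simpa using hu0acyc i
      · intro j'
        simpa using hu'acyc j' i
    · intro x hx
      by_cases hxc : ∀ i, x i ∈ u0 i
      · exact ⟨0, by simpa using hxc⟩
      · obtain ⟨j', hj'⟩ := hu' x (Finset.mem_filter.mpr ⟨hx, hxc⟩)
        exact ⟨j'.succ, by simpa using hj'⟩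

private lemma main_bound' {t : ℕ} (ht : 1 ≤ t) :
    (chromNum (andPow E t) : ℝ) ≤ w ^ t * (t : ℝ) ^ 2 *
      ((Real.log (Fintype.card V) + 3) * ((Fintype.card V : ℝ) + 1)) := by
  classical
  set N := Fintype.card V with hNdef
  have hN : 1 ≤ N := Fintype.card_pos
  have hN' : (1:ℝ) ≤ (N:ℝ) := by exact_mod_cast hN
  have hlogN : 0 ≤ Real.log N := Real.log_nonneg hN'
  have hw1 : (1:ℝ) ≤ w := one_le_w' E g w hg0 hgacyc hgcov hw
  have hwt : (0:ℝ) < w ^ t := pow_pos (by linarith) t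
  have hwt1 : (1:ℝ) ≤ w ^ t := one_le_pow₀ hw1
  set q : ℝ := 1 / w ^ t with hqdef
  have hq0 : 0 < q := by positivity
  have hq1 : q ≤ 1 := by
    rw [hqdef, div_le_one hwt]; exact hwt1
  set k : ℕ := ⌈w ^ t * (t * (Real.log N + 1))⌉₊ with hkdef
  have hkge : w ^ t * (t * (Real.log N + 1)) ≤ (k : ℝ) := Nat.le_ceil _
  have hcount : ((Finset.univ : Finset (Fin t → V)).card : ℝ) * (1 - q) ^ k < 1 := by
    have hcard : ((Finset.univ : Finset (Fin t → V)).card : ℝ) = (N : ℝ) ^ t := by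
      rw [Finset.card_univ, Fintype.card_fun]
      simp
      rfl
    have h1 : (1 - q) ^ k ≤ Real.exp (-q) ^ k := by
      refine pow_le_pow_left₀ (by linarith) ?_ k
      linarith [Real.add_one_le_exp (-q)]
    have h2 : Real.exp (-q) ^ k = Real.exp ((k : ℝ) * (-q)) := (Real.exp_nat_mul _ k).symm
    have h3 : ((N : ℝ)) ^ t = Real.exp ((t : ℝ) * Real.log N) := by
      rw [Real.exp_nat_mul, Real.exp_log (by linarith)]
    have hkq : (t : ℝ) * (Real.log N + 1) ≤ (k : ℝ) * q := by
      calc (t : ℝ) * (Real.log N + 1) = w ^ t * (t * (Real.log N + 1)) * q := by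
            rw [hqdef]; field_simp
        _ ≤ (k : ℝ) * q := by
            exact mul_le_mul_of_nonneg_right hkge hq0.le
    calc ((Finset.univ : Finset (Fin t → V)).card : ℝ) * (1 - q) ^ k
        ≤ (N : ℝ) ^ t * Real.exp ((k : ℝ) * (-q)) := by
          rw [hcard]
          exact mul_le_mul_of_nonneg_left (h1.trans_eq h2) (by positivity)
      _ = Real.exp ((t : ℝ) * Real.log N - (k : ℝ) * q) := by
          rw [h3, ← Real.exp_add]; ring_nf
      _ < 1 := by
          rw [Real.exp_lt_one_iff]
          have ht' : (1:ℝ) ≤ (t:ℝ) := by exact_mod_cast ht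
          nlinarith
  obtain ⟨u, huacyc, hucov⟩ := greedy_cover' E g w hg0 hgacyc hgcov hw t k Finset.univ hcount
  have hranks := fun j i => exists_rank' (huacyc j i)
  choose r hr1 hr2 using hranks
  have hcov' : ∀ x : Fin t → V, ∃ j, ∀ i, x i ∈ u j i := fun x => hucov x (Finset.mem_univ x)
  set jof : (Fin t → V) → Fin k := fun x => (hcov' x).choose with hjof
  have hjof' : ∀ x, ∀ i, x i ∈ u (jof x) i := fun x => (hcov' x).choose_spec
  set ρ : (Fin t → V) → ℕ := fun x => ∑ i, r (jof x) i (x i) with hρ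
  have hρlt : ∀ x, ρ x < t * N + 1 := by
    intro x
    have : ρ x ≤ t * N := by
      calc ρ x ≤ ∑ _i : Fin t, N := Finset.sum_le_sum (fun i _ => hr1 (jof x) i (x i))
        _ = t * N := by simp [Finset.sum_const, mul_comm]
    omega
  have hcolor : chromNum (andPow E t) ≤ k * (t * N + 1) := by
    refine chromNum_le' _ (fun x => finProdFinEquiv (jof x, ⟨ρ x, hρlt x⟩)) ?_
    rintro x y ⟨hne, hco⟩ heq
    have heq' := finProdFinEquiv.injective heq
    have hj : jof x = jof y := congrArg Prod.fst heq'
    have hρeq : ρ x = ρ y := congrArg (fun p => (Prod.snd p : Fin (t * N + 1)).val) heq'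
    obtain ⟨i0, hi0⟩ := Function.ne_iff.mp hne
    have hlt : ρ x < ρ y := by
      rw [hρ]
      simp only [hj]
      refine Finset.sum_lt_sum (fun i _ => ?_) ⟨i0, Finset.mem_univ i0, ?_⟩
      · rcases hco i with h | h
        · rw [h]
        · rcases eq_or_ne (x i) (y i) with he | hne'
          · rw [he]
          · refine (hr2 (jof y) i (x i) ?_ (y i) (hjof' y i) h).le
            rw [← hj]; exact hjof' x i
      · have hE0 : E (x i0) (y i0) := (hco i0).resolve_left hi0
        refine hr2 (jof y) i0 (x i0) ?_ (y i0) (hjof' y i0) hE0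
        rw [← hj]; exact hjof' x i0
    omega
  have hkub : (k : ℝ) ≤ w ^ t * (t * (Real.log N + 2)) := by
    have h1 : (k : ℝ) < w ^ t * (t * (Real.log N + 1)) + 1 :=
      Nat.ceil_lt_add_one (by positivity)
    have ht' : (1:ℝ) ≤ (t:ℝ) := by exact_mod_cast ht
    nlinarith
  have htN : ((t * N + 1 : ℕ) : ℝ) ≤ (t : ℝ) * ((N : ℝ) + 1) := by
    have ht' : (1:ℝ) ≤ (t:ℝ) := by exact_mod_cast ht
    push_cast
    nlinarith
  calc (chromNum (andPow E t) : ℝ) ≤ ((k * (t * N + 1) : ℕ) : ℝ) := by exact_mod_cast hcolor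
    _ = (k : ℝ) * ((t * N + 1 : ℕ) : ℝ) := by push_cast; ring
    _ ≤ (w ^ t * (t * (Real.log N + 2))) * ((t : ℝ) * ((N : ℝ) + 1)) := by
        refine mul_le_mul hkub htN (by positivity) (by positivity)
    _ ≤ w ^ t * (t : ℝ) ^ 2 * ((Real.log N + 3) * ((N : ℝ) + 1)) := by
        have ht' : (1:ℝ) ≤ (t:ℝ) := by exact_mod_cast ht
        nlinarith [hwt, hlogN, hN']

end cover
end StmtAux

/-- r_D(G) ≤ χ_{dir,f}(G). -/
theorem stmt12 {V : Type*} [Fintype V] [Nonempty V]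
    (E : V → V → Prop) (hE : ∀ v, ¬ E v v) :
    ∃ r : ℝ,
      Tendsto (fun t : ℕ => (chromNum (andPow E t) : ℝ) ^ (1 / (t : ℝ))) atTop (nhds r) ∧
      r ≤ fracDichromNum E := by
  have hχ1 : ∀ t, 1 ≤ chromNum (andPow E t) :=
    fun t => one_le_chromNum' _ (fun _ _ h => h.1)
  have hχpos : ∀ t, (0:ℝ) < (chromNum (andPow E t) : ℝ) := by
    intro t
    exact_mod_cast hχ1 t
  set u : ℕ → ℝ := fun t => Real.log (chromNum (andPow E t)) with hu
  have hsub : Subadditive u := by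
    intro m n
    have hmul : (chromNum (andPow E (m + n)) : ℝ)
        ≤ (chromNum (andPow E m) : ℝ) * (chromNum (andPow E n) : ℝ) := by
      exact_mod_cast chromNum_andPow_submul' E m n
    calc u (m + n) ≤ Real.log ((chromNum (andPow E m) : ℝ) * (chromNum (andPow E n) : ℝ)) :=
          Real.log_le_log (hχpos _) hmul
      _ = u m + u n := Real.log_mul (hχpos m).ne' (hχpos n).ne'
  have hu0 : ∀ n, 0 ≤ u n := fun n => Real.log_nonneg (by exact_mod_cast hχ1 n)
  have hbdd : BddBelow (Set.range fun n : ℕ => u n / n) := by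
    refine ⟨0, ?_⟩
    rintro x ⟨n, rfl⟩
    exact div_nonneg (hu0 n) (Nat.cast_nonneg n)
  have htends := hsub.tendsto_lim hbdd
  refine ⟨Real.exp hsub.lim, ?_, ?_⟩
  · have h1 : Tendsto (fun n : ℕ => Real.exp (u n / n)) atTop (nhds (Real.exp hsub.lim)) :=
      (Real.continuous_exp.tendsto _).comp htends
    refine Tendsto.congr' ?_ h1
    filter_upwards [eventually_ge_atTop 1] with n hn
    rw [Real.rpow_def_of_pos (hχpos n), mul_one_div]
  · apply le_csInf
    · -- nonemptiness of the feasible set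
      classical
      refine ⟨∑ U : Finset V, (if U.card = 1 then (1:ℝ) else 0),
        fun U => if U.card = 1 then (1:ℝ) else 0, ?_, ?_, ?_, rfl⟩
      · intro U
        dsimp only
        split <;> norm_num
      · intro U hU
        dsimp only
        rw [if_neg]
        intro hcard
        obtain ⟨v, rfl⟩ := Finset.card_eq_one.mp hcard
        apply hU
        rintro ⟨n, c, hmem, hstep⟩
        have hv : ∀ i, c i = v := fun i => by simpa using hmem i
        have := hstep 0
        rw [hv, hv] at this
        exact hE v this
      · intro v
        have hcongr : ∀ U : Finset V,
            (if v ∈ U then (if U.card = 1 then (1:ℝ) else 0) else 0)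
            = if U = {v} then (1:ℝ) else 0 := by
          intro U
          split_ifs with h1 h2 h3 h4 h5
          · rfl
          · obtain ⟨a, rfl⟩ := Finset.card_eq_one.mp h2
            rw [Finset.mem_singleton] at h1
            subst h1
            exact absurd rfl h3
          · subst h4
            simp at h2
          · rfl
          · subst h5
            simp at h1
          · rfl
        rw [Finset.sum_congr rfl (fun U _ => hcongr U)]
        rw [Finset.sum_ite_eq' Finset.univ ({v} : Finset V) (fun _ => (1:ℝ))]
        simp
    · classical
      rintro b ⟨g, hg0, hgacyc, hgcov, hb⟩
      set w : ℝ := ∑ U : Finset V, g U with hwdef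
      have hw : w = ∑ U : Finset V, g U := rfl
      have hw1 : (1:ℝ) ≤ w := one_le_w' E g w hg0 hgacyc hgcov hw
      have hwpos : (0:ℝ) < w := by linarith
      set N := Fintype.card V with hNdef
      have hN : 1 ≤ N := Fintype.card_pos
      have hN' : (1:ℝ) ≤ (N:ℝ) := by exact_mod_cast hN
      have hlogN : 0 ≤ Real.log N := Real.log_nonneg hN'
      set C : ℝ := (Real.log N + 3) * ((N : ℝ) + 1) with hCdef
      have hC1 : (1:ℝ) ≤ C := by nlinarith
      have hCpos : (0:ℝ) < C := by linarith
      have hbound : ∀ t : ℕ, 1 ≤ t →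
          u t / t ≤ Real.log w + (2 * Real.log t + Real.log C) / t := by
        intro t ht
        have ht0 : (0:ℝ) < (t:ℝ) := by exact_mod_cast ht
        have hmb := main_bound' E g w hg0 hgacyc hgcov hw ht
        have hlog : u t ≤ (t : ℝ) * Real.log w + (2 * Real.log t + Real.log C) := by
          have h1 : u t ≤ Real.log (w ^ t * (t : ℝ) ^ 2 * C) :=
            Real.log_le_log (hχpos t) hmb
          rw [Real.log_mul (by positivity) (by positivity),
            Real.log_mul (by positivity) (by positivity),
            Real.log_pow, Real.log_pow] at h1
          push_cast at h1
          linarith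
        calc u t / t ≤ ((t : ℝ) * Real.log w + (2 * Real.log t + Real.log C)) / t := by
              gcongr
          _ = Real.log w + (2 * Real.log t + Real.log C) / t := by
              rw [add_div, mul_div_cancel_left₀ _ ht0.ne']
      have hlogdiv : Tendsto (fun n : ℕ => Real.log n / n) atTop (nhds 0) :=
        (Real.isLittleO_log_id_atTop.tendsto_div_nhds_zero).comp
          tendsto_natCast_atTop_atTop
      have hA : Tendsto (fun t : ℕ => Real.log w + (2 * Real.log t + Real.log C) / t)
          atTop (nhds (Real.log w)) := by
        have h2 : Tendsto (fun t : ℕ => (2 * Real.log t + Real.log C) / t) atTop (nhds 0) := by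
          have heq : (fun t : ℕ => (2 * Real.log t + Real.log C) / t)
              = fun t : ℕ => 2 * (Real.log t / t) + Real.log C / t := by
            funext t; ring
          rw [heq]
          simpa using (hlogdiv.const_mul 2).add
            (tendsto_const_div_atTop_nhds_zero_nat (Real.log C))
        simpa using tendsto_const_nhds.add h2
      have hlim_le : hsub.lim ≤ Real.log w := by
        refine le_of_tendsto_of_tendsto htends hA ?_
        filter_upwards [eventually_ge_atTop 1] with t ht
        exact hbound t ht
      calc Real.exp hsub.lim ≤ Real.exp (Real.log w) := Real.exp_le_exp.mpr hlim_le
        _ = w := Real.exp_log hwpos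
        _ = b := hb.symm
end

section
/- Let A⃗_5 be the oriented 5-cycle on vertex set {0,1,2,3,4} with edge set {(1,0),(1,2),(3,2),(4,3),(4,0)}, and let A⃗_5^c be its complement, the digraph on {0,1,2,3,4} whose edge set consists of all ordered pairs of distinct vertices not in E(A⃗_5). Then √5 ≤ r_D(A⃗_5^c) ≤ √6 and χ_{dir,f}(A⃗_5^c) = 5/2 (in particular r_D(A⃗_5^c) < χ_{dir,f}(A⃗_5^c)). -/
open Filter

/-- The oriented 5-cycle A⃗_5 with edge set {(1,0),(1,2),(3,2),(4,3),(4,0)}. -/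
def A5 : Fin 5 → Fin 5 → Prop := fun a b =>
  (a, b) ∈ ({((1 : Fin 5), (0 : Fin 5)), (1, 2), (3, 2), (4, 3), (4, 0)} :
    Set (Fin 5 × Fin 5))

/-- The complement A⃗_5ᶜ: all ordered pairs of distinct vertices not in E(A⃗_5). -/
def A5c : Fin 5 → Fin 5 → Prop := fun a b => a ≠ b ∧ ¬ A5 a b

open Real

instance A5.decRel : DecidableRel A5 := fun a b =>
  decidable_of_iff ((a,b) = (1,0) ∨ (a,b) = (1,2) ∨ (a,b) = (3,2) ∨ (a,b) = (4,3) ∨ (a,b) = (4,0))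
    (by simp [A5, Set.mem_insert_iff, Set.mem_singleton_iff])

instance A5c.decRel : DecidableRel A5c := fun a b => by unfold A5c; infer_instance

def cls : Fin 5 → Fin 5 → Fin 6 :=
  ![![0,0,1,2,3],![1,0,2,4,3],![4,4,2,1,5],![5,1,4,3,5],![3,2,0,5,1]]

def lev : Fin 5 → Fin 5 → ℕ :=
  ![![0,1,0,1,1],![2,2,1,2,2],![0,1,0,1,2],![0,3,1,0,3],![1,2,1,1,4]]

lemma lev_le : ∀ a b, lev a b ≤ 4 := by decide

lemma grading : ∀ a b a' b' : Fin 5, cls a b = cls a' b' →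
    ((lev a' b' < lev a b → A5 a a' ∨ A5 b b') ∧
     (lev a b = lev a' b' → ¬(a = a' ∧ b = b') → A5 a a' ∨ A5 b b')) := by decide

lemma A5_ne : ∀ a b, A5 a b → a ≠ b := by decide

lemma A5_cases : ∀ a b, A5 a b → (a=1∧b=0) ∨ (a=1∧b=2) ∨ (a=3∧b=2) ∨ (a=4∧b=3) ∨ (a=4∧b=0) := by
  decide

section basic
variable {V : Type*} [Fintype V] (E : V → V → Prop)

lemma chrom_set_nonempty (hirr : ∀ u v, E u v → u ≠ v) :
    {n : ℕ | ∃ c : V → Fin n, ∀ u v : V, E u v → c u ≠ c v}.Nonempty := by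
  classical
  exact ⟨Fintype.card V, Fintype.equivFin V, fun u v huv h =>
    hirr u v huv ((Fintype.equivFin V).injective h)⟩

lemma chromNum_exists (hirr : ∀ u v, E u v → u ≠ v) :
    ∃ c : V → Fin (chromNum E), ∀ u v : V, E u v → c u ≠ c v :=
  Nat.sInf_mem (chrom_set_nonempty E hirr)

lemma chromNum_le_card_s13 {C : Type*} [Fintype C] (c : V → C)
    (hc : ∀ u v : V, E u v → c u ≠ c v) : chromNum E ≤ Fintype.card C := by
  classical
  exact Nat.sInf_le ⟨fun v => (Fintype.equivFin C) (c v), fun u v huv h =>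
    hc u v huv ((Fintype.equivFin C).injective h)⟩

end basic

lemma andPow_ne_s13 {V : Type*} (E : V → V → Prop) (t : ℕ) :
    ∀ u v, andPow E t u v → u ≠ v := fun _ _ h => h.1

lemma chrom_submul {V : Type*} [Fintype V] (E : V → V → Prop) (m n : ℕ) :
    chromNum (andPow E (m + n)) ≤ chromNum (andPow E m) * chromNum (andPow E n) := by
  classical
  obtain ⟨c1, hc1⟩ := chromNum_exists (andPow E m) (andPow_ne_s13 E m)
  obtain ⟨c2, hc2⟩ := chromNum_exists (andPow E n) (andPow_ne_s13 E n)
  have := chromNum_le_card_s13 (andPow E (m + n))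
    (C := Fin (chromNum (andPow E m)) × Fin (chromNum (andPow E n)))
    (fun x => (c1 (fun i => x (Fin.castAdd n i)), c2 (fun i => x (Fin.natAdd m i))))
    (by
      rintro x y ⟨hne, hall⟩ hceq
      have h1 := congrArg Prod.fst hceq
      have h2 := congrArg Prod.snd hceq
      simp only at h1 h2
      by_cases hl : (fun i => x (Fin.castAdd n i)) = (fun i => y (Fin.castAdd n i))
      · by_cases hr : (fun i => x (Fin.natAdd m i)) = (fun i => y (Fin.natAdd m i))
        · apply hne
          funext i
          refine Fin.addCases (fun j => ?_) (fun j => ?_) i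
          · exact congrFun hl j
          · exact congrFun hr j
        · exact hc2 _ _ ⟨hr, fun i => hall (Fin.natAdd m i)⟩ h2
      · exact hc1 _ _ ⟨hl, fun i => hall (Fin.castAdd n i)⟩ h1)
  simpa using this

lemma chrom_even (t : ℕ) :
    chromNum (andPow A5c (2 * t)) ≤ 6 ^ t * (4 * t + 1) := by
  classical
  set i1 : Fin t → Fin (2 * t) := fun i => ⟨2 * i.1, by omega⟩ with hi1
  set i2 : Fin t → Fin (2 * t) := fun i => ⟨2 * i.1 + 1, by omega⟩ with hi2
  have hsum : ∀ x : Fin (2 * t) → Fin 5,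
      (∑ i : Fin t, lev (x (i1 i)) (x (i2 i))) < 4 * t + 1 := by
    intro x
    have : (∑ i : Fin t, lev (x (i1 i)) (x (i2 i))) ≤ ∑ _i : Fin t, 4 :=
      Finset.sum_le_sum (fun i _ => lev_le _ _)
    simp at this
    omega
  have := chromNum_le_card_s13 (andPow A5c (2 * t))
    (C := (Fin t → Fin 6) × Fin (4 * t + 1))
    (fun x => (fun i => cls (x (i1 i)) (x (i2 i)),
               ⟨∑ i : Fin t, lev (x (i1 i)) (x (i2 i)), hsum x⟩))
    (by
      rintro x y ⟨hne, hall⟩ hceq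
      have hcls : ∀ i, cls (x (i1 i)) (x (i2 i)) = cls (y (i1 i)) (y (i2 i)) :=
        fun i => congrFun (congrArg Prod.fst hceq) i
      have hlev : (∑ i : Fin t, lev (x (i1 i)) (x (i2 i)))
          = ∑ i : Fin t, lev (y (i1 i)) (y (i2 i)) :=
        congrArg (fun p => (Prod.snd p).1) hceq
      -- a coordinate with an A5 edge contradicts hall
      have contra : ∀ j : Fin (2 * t), A5 (x j) (y j) → False := by
        intro j hj
        rcases hall j with h | h
        · exact A5_ne _ _ hj h
        · exact h.2 hj
      by_cases hex : ∃ i, lev (y (i1 i)) (y (i2 i)) < lev (x (i1 i)) (x (i2 i))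
      · obtain ⟨i, hi⟩ := hex
        rcases (grading _ _ _ _ (hcls i)).1 hi with h | h
        · exact contra _ h
        · exact contra _ h
      · push_neg at hex
        have hEq : ∀ i ∈ Finset.univ, lev (x (i1 i)) (x (i2 i)) = lev (y (i1 i)) (y (i2 i)) := by
          rw [← Finset.sum_eq_sum_iff_of_le (fun i _ => hex i)]
          exact hlev
        obtain ⟨j, hj⟩ := Function.ne_iff.1 hne
        set i : Fin t := ⟨j.1 / 2, by omega⟩ with hi
        have hdiff : ¬(x (i1 i) = y (i1 i) ∧ x (i2 i) = y (i2 i)) := by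
          rintro ⟨ha, hb⟩
          have : j = i1 i ∨ j = i2 i := by
            have hj2 : j.1 = 2 * (j.1 / 2) ∨ j.1 = 2 * (j.1 / 2) + 1 := by omega
            rcases hj2 with h2 | h2
            · exact Or.inl (Fin.ext h2)
            · exact Or.inr (Fin.ext h2)
          rcases this with h | h
          · exact hj (by rw [h]; exact ha)
          · exact hj (by rw [h]; exact hb)
        rcases (grading _ _ _ _ (hcls i)).2 (hEq i (Finset.mem_univ i)) hdiff with h | h
        · exact contra _ h
        · exact contra _ h)
  calc chromNum (andPow A5c (2*t)) ≤ Fintype.card ((Fin t → Fin 6) × Fin (4 * t + 1)) := this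
    _ = 6 ^ t * (4 * t + 1) := by simp

noncomputable def uvec : Fin 5 → Fin 3 → ℝ := fun k =>
  ![Real.sqrt (1 - (Real.sqrt 5)⁻¹) * Real.cos (4 * π * k.1 / 5),
    Real.sqrt (1 - (Real.sqrt 5)⁻¹) * Real.sin (4 * π * k.1 / 5),
    Real.sqrt (Real.sqrt 5)⁻¹]

lemma sqrt5_pos : (0:ℝ) < Real.sqrt 5 := Real.sqrt_pos.2 (by norm_num)

lemma inv_sqrt5_le_one : (Real.sqrt 5)⁻¹ ≤ 1 := by
  rw [inv_le_one_iff₀]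
  right
  rw [show (1:ℝ) = Real.sqrt 1 by simp]
  exact Real.sqrt_le_sqrt (by norm_num)

lemma uvec_dot (a b : Fin 5) :
    ∑ j : Fin 3, uvec a j * uvec b j
      = (1 - (Real.sqrt 5)⁻¹) * Real.cos (4 * π * a.1 / 5 - 4 * π * b.1 / 5)
        + (Real.sqrt 5)⁻¹ := by
  have hs : Real.sqrt (1 - (Real.sqrt 5)⁻¹) * Real.sqrt (1 - (Real.sqrt 5)⁻¹)
      = 1 - (Real.sqrt 5)⁻¹ :=
    Real.mul_self_sqrt (by linarith [inv_sqrt5_le_one])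
  have hh : Real.sqrt (Real.sqrt 5)⁻¹ * Real.sqrt (Real.sqrt 5)⁻¹ = (Real.sqrt 5)⁻¹ :=
    Real.mul_self_sqrt (by positivity)
  rw [Fin.sum_univ_three]
  simp only [uvec, Matrix.cons_val_zero, Matrix.cons_val_one, Matrix.head_cons,
    Matrix.cons_val_two, Matrix.tail_cons]
  rw [Real.cos_sub]
  linear_combination (Real.cos (4 * π * a.1 / 5) * Real.cos (4 * π * b.1 / 5)
    + Real.sin (4 * π * a.1 / 5) * Real.sin (4 * π * b.1 / 5)) * hs + hh

lemma uvec_norm (a : Fin 5) : ∑ j : Fin 3, uvec a j * uvec a j = 1 := by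
  rw [uvec_dot]
  simp

lemma cos_4pi5 : Real.cos (4 * π / 5) = -((1 + Real.sqrt 5) / 4) := by
  have : (4:ℝ) * π / 5 = π - π / 5 := by ring
  rw [this, Real.cos_pi_sub, Real.cos_pi_div_five]

lemma key_zero : (1 - (Real.sqrt 5)⁻¹) * Real.cos (4 * π / 5) + (Real.sqrt 5)⁻¹ = 0 := by
  rw [cos_4pi5]
  have h5 : Real.sqrt 5 * Real.sqrt 5 = 5 := Real.mul_self_sqrt (by norm_num)
  have hpos := sqrt5_pos
  field_simp
  nlinarith [h5]

lemma cos_eq_cos_4pi5 (p q : ℕ) (hpq : q + 1 = p ∨ q = p + 1 ∨ p = q + 4) :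
    Real.cos (4 * π * p / 5 - 4 * π * q / 5) = Real.cos (4 * π / 5) := by
  rcases hpq with h | h | h
  · have hc : (q:ℝ) + 1 = p := by exact_mod_cast congrArg (Nat.cast : ℕ → ℝ) h
    have e : 4 * π * (p:ℝ) / 5 - 4 * π * q / 5 = 4 * π / 5 := by rw [← hc]; ring
    rw [e]
  · have hc : (q:ℝ) = (p:ℝ) + 1 := by exact_mod_cast congrArg (Nat.cast : ℕ → ℝ) h
    have e : 4 * π * (p:ℝ) / 5 - 4 * π * q / 5 = -(4 * π / 5) := by rw [hc]; ring
    rw [e, Real.cos_neg]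
  · have hc : (p:ℝ) = (q:ℝ) + 4 := by exact_mod_cast congrArg (Nat.cast : ℕ → ℝ) h
    have e : 4 * π * (p:ℝ) / 5 - 4 * π * q / 5 = -(4 * π / 5) + (2:ℤ) * (2 * π) := by
      rw [hc]; push_cast; ring
    rw [e, Real.cos_add_int_mul_two_pi, Real.cos_neg]

lemma uvec_orth {a b : Fin 5} (h : A5 a b) : ∑ j : Fin 3, uvec a j * uvec b j = 0 := by
  rw [uvec_dot]
  have e : Real.cos (4 * π * a.1 / 5 - 4 * π * b.1 / 5) = Real.cos (4 * π / 5) := by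
    apply cos_eq_cos_4pi5
    rcases A5_cases a b h with ⟨rfl,rfl⟩|⟨rfl,rfl⟩|⟨rfl,rfl⟩|⟨rfl,rfl⟩|⟨rfl,rfl⟩ <;> decide
  rw [e]
  exact key_zero

lemma uvec_two (a : Fin 5) : uvec a 2 = Real.sqrt (Real.sqrt 5)⁻¹ := by
  simp [uvec]

lemma indep_card_le (t : ℕ) (S : Finset (Fin t → Fin 5))
    (hS : ∀ x ∈ S, ∀ y ∈ S, x ≠ y → ∃ i, A5 (x i) (y i)) :
    (S.card : ℝ) ≤ Real.sqrt 5 ^ t := by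
  classical
  set U : (Fin t → Fin 5) → EuclideanSpace ℝ (Fin t → Fin 3) :=
    fun x => WithLp.toLp 2 (fun j => ∏ i, uvec (x i) (j i)) with hU
  have hinner : ∀ x y, (inner ℝ (U x) (U y) : ℝ)
      = ∏ i, ∑ c : Fin 3, uvec (x i) c * uvec (y i) c := by
    intro x y
    have : (inner ℝ (U x) (U y) : ℝ)
        = ∑ j : Fin t → Fin 3, ∏ i, (uvec (x i) (j i) * uvec (y i) (j i)) := by
      simp [hU, PiLp.inner_apply, RCLike.inner_apply, Finset.prod_mul_distrib, mul_comm]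
    rw [this]
    symm
    rw [Finset.prod_univ_sum, Fintype.piFinset_univ]
  have horth : Orthonormal ℝ (fun x : {a // a ∈ S} => U x.1) := by
    rw [orthonormal_iff_ite]
    intro x y
    by_cases hxy : x = y
    · subst hxy
      simp only [if_pos rfl, hinner]
      rw [Finset.prod_congr rfl (fun i _ => uvec_norm (x.1 i))]
      simp
    · have hne : x.1 ≠ y.1 := fun h => hxy (Subtype.ext h)
      obtain ⟨i, hi⟩ := hS x.1 x.2 y.1 y.2 hne
      rw [if_neg hxy, hinner]
      exact Finset.prod_eq_zero (Finset.mem_univ i) (uvec_orth hi)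
  set C : EuclideanSpace ℝ (Fin t → Fin 3) :=
    EuclideanSpace.single (fun _ => (2 : Fin 3)) (1 : ℝ) with hC
  have hbessel := horth.sum_inner_products_le (s := Finset.univ) C
  have hinC : ∀ x : Fin t → Fin 5, (inner ℝ (U x) C : ℝ) = Real.sqrt (Real.sqrt 5)⁻¹ ^ t := by
    intro x
    rw [hC, EuclideanSpace.inner_single_right]
    simp only [map_one, one_mul, hU]
    rw [Finset.prod_congr rfl (fun i _ => uvec_two (x i))]
    simp
  have hnormC : ‖C‖ = 1 := by rw [hC, EuclideanSpace.norm_single]; simp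
  rw [hnormC] at hbessel
  have hsum : ∑ x : {a // a ∈ S}, ‖(inner ℝ (U x.1) C : ℝ)‖ ^ 2
      = (S.card : ℝ) * ((Real.sqrt 5)⁻¹) ^ t := by
    have base : (Real.sqrt (Real.sqrt 5)⁻¹) ^ 2 = (Real.sqrt 5)⁻¹ :=
      Real.sq_sqrt (by positivity)
    have hterm : ∀ x : {a // a ∈ S}, ‖(inner ℝ (U x.1) C : ℝ)‖ ^ 2
        = ((Real.sqrt 5)⁻¹) ^ t := by
      intro x
      rw [hinC, Real.norm_eq_abs, sq_abs, ← pow_mul, mul_comm t 2, pow_mul, base]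
    rw [Finset.sum_congr rfl (fun x _ => hterm x)]
    simp [Finset.card_univ, mul_comm]
  rw [hsum] at hbessel
  have h5 : (0:ℝ) < Real.sqrt 5 := sqrt5_pos
  have hkey : (Real.sqrt 5) ^ t * ((Real.sqrt 5)⁻¹) ^ t = 1 := by
    rw [← mul_pow, mul_inv_cancel₀ (ne_of_gt h5), one_pow]
  have hpos : (0:ℝ) < ((Real.sqrt 5)⁻¹) ^ t := by positivity
  calc (S.card : ℝ) = (Real.sqrt 5 ^ t * ((Real.sqrt 5)⁻¹) ^ t) * S.card := by
        rw [hkey, one_mul]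
    _ = Real.sqrt 5 ^ t * ((S.card : ℝ) * ((Real.sqrt 5)⁻¹) ^ t) := by ring
    _ ≤ Real.sqrt 5 ^ t * 1 ^ 2 := mul_le_mul_of_nonneg_left hbessel (pow_nonneg h5.le t)
    _ = Real.sqrt 5 ^ t := by ring

lemma chrom_lower (t : ℕ) : Real.sqrt 5 ^ t ≤ (chromNum (andPow A5c t) : ℝ) := by
  classical
  obtain ⟨c, hc⟩ := chromNum_exists (andPow A5c t) (fun _ _ h => h.1)
  have hclass : ∀ k : Fin (chromNum (andPow A5c t)),
      (((Finset.univ.filter (fun x => c x = k)) : Finset (Fin t → Fin 5)).card : ℝ)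
        ≤ Real.sqrt 5 ^ t := by
    intro k
    apply indep_card_le
    intro x hx y hy hxy
    have hcx : c x = k := (Finset.mem_filter.1 hx).2
    have hcy : c y = k := (Finset.mem_filter.1 hy).2
    have hnE : ¬ andPow A5c t x y := fun hE => hc x y hE (hcx.trans hcy.symm)
    unfold andPow at hnE
    push_neg at hnE
    obtain ⟨i, hi1, hi2⟩ := hnE hxy
    refine ⟨i, ?_⟩
    by_contra hA
    exact hi2 ⟨hi1, hA⟩
  have hcount : ((5:ℕ)^t : ℝ) = ∑ k : Fin (chromNum (andPow A5c t)),
      (((Finset.univ.filter (fun x => c x = k)) : Finset (Fin t → Fin 5)).card : ℝ) := by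
    rw [← Nat.cast_sum]
    congr 1
    have := Finset.card_eq_sum_card_fiberwise
      (f := c) (s := (Finset.univ : Finset (Fin t → Fin 5))) (t := Finset.univ)
      (fun x _ => Finset.mem_univ (c x))
    rw [← this]
    simp
  have hle : ((5:ℕ)^t : ℝ) ≤ (chromNum (andPow A5c t)) * Real.sqrt 5 ^ t := by
    rw [hcount]
    calc _ ≤ ∑ _k : Fin (chromNum (andPow A5c t)), Real.sqrt 5 ^ t := Finset.sum_le_sum (fun k _ => hclass k)
      _ = (chromNum (andPow A5c t)) * Real.sqrt 5 ^ t := by simp [mul_comm]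
  have hkey : Real.sqrt 5 ^ t * Real.sqrt 5 ^ t = ((5:ℕ)^t : ℝ) := by
    rw [← mul_pow, Real.mul_self_sqrt (by norm_num)]
    norm_num
  have hpos : (0:ℝ) < Real.sqrt 5 ^ t := pow_pos sqrt5_pos t
  nlinarith [hle, hkey, hpos]

lemma acyclic_pair {u v : Fin 5} (h1 : A5c u v) (h2 : ¬ A5c v u) :
    IsAcyclicSet A5c {u, v} := by
  rintro ⟨n, c, hmem, hcyc⟩
  have huv : u ≠ v := h1.1
  have hchar : ∀ x y : Fin 5, x ∈ ({u, v} : Set (Fin 5)) → y ∈ ({u, v} : Set (Fin 5)) →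
      A5c x y → x = u ∧ y = v := by
    intro x y hx hy hxy
    rcases hx with rfl | rfl <;> rcases hy with rfl | rfl
    · exact absurd rfl hxy.1
    · exact ⟨rfl, rfl⟩
    · exact absurd hxy h2
    · exact absurd rfl hxy.1
  have e0 := hchar (c 0) (c (0 + 1)) (hmem 0) (hmem (0 + 1)) (hcyc 0)
  have e1 := hchar (c (0 + 1)) (c (0 + 1 + 1)) (hmem (0 + 1)) (hmem (0 + 1 + 1)) (hcyc (0 + 1))
  exact huv (e1.1.symm.trans e0.2)

lemma three_two_cycle : ∀ U : Finset (Fin 5), 3 ≤ U.card →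
    ∃ a, a ∈ U ∧ ∃ b, b ∈ U ∧ A5c a b ∧ A5c b a := by decide

lemma acyclic_card_le (U : Finset (Fin 5)) (h : IsAcyclicSet A5c (↑U : Set (Fin 5))) :
    U.card ≤ 2 := by
  by_contra hc
  push_neg at hc
  obtain ⟨a, ha, b, hb, hab, hba⟩ := three_two_cycle U hc
  refine h ⟨1, ![a, b], fun i => ?_, fun i => ?_⟩
  · fin_cases i <;> simpa
  · fin_cases i <;> simpa

def pairsF : Finset (Finset (Fin 5)) := {{0,1}, {1,2}, {2,3}, {3,4}, {4,0}}

noncomputable def gfrac : Finset (Fin 5) → ℝ := fun U => if U ∈ pairsF then 2⁻¹ else 0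

lemma pairsF_sum (f : Finset (Fin 5) → ℝ) :
    ∑ U ∈ pairsF, f U = f {0,1} + f {1,2} + f {2,3} + f {3,4} + f {4,0} := by
  rw [pairsF]
  rw [Finset.sum_insert (by decide), Finset.sum_insert (by decide),
    Finset.sum_insert (by decide), Finset.sum_insert (by decide), Finset.sum_singleton]
  ring

lemma pairsF_cases : ∀ U ∈ pairsF,
    U = {0,1} ∨ U = {1,2} ∨ U = {2,3} ∨ U = {3,4} ∨ U = {4,0} := by decide

lemma pairsF_acyclic : ∀ U ∈ pairsF, IsAcyclicSet A5c (↑U : Set (Fin 5)) := by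
  intro U hU
  rcases pairsF_cases U hU with rfl | rfl | rfl | rfl | rfl
  · have h := acyclic_pair (u := 0) (v := 1) (by decide) (by decide)
    have e : (↑({0,1} : Finset (Fin 5)) : Set (Fin 5)) = {0, 1} := by ext x; simp
    rwa [e]
  · have h := acyclic_pair (u := 2) (v := 1) (by decide) (by decide)
    have e : (↑({1,2} : Finset (Fin 5)) : Set (Fin 5)) = {2, 1} := by ext x; simp [or_comm]
    rwa [e]
  · have h := acyclic_pair (u := 2) (v := 3) (by decide) (by decide)
    have e : (↑({2,3} : Finset (Fin 5)) : Set (Fin 5)) = {2, 3} := by ext x; simp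
    rwa [e]
  · have h := acyclic_pair (u := 3) (v := 4) (by decide) (by decide)
    have e : (↑({3,4} : Finset (Fin 5)) : Set (Fin 5)) = {3, 4} := by ext x; simp
    rwa [e]
  · have h := acyclic_pair (u := 0) (v := 4) (by decide) (by decide)
    have e : (↑({4,0} : Finset (Fin 5)) : Set (Fin 5)) = {0, 4} := by ext x; simp [or_comm]
    rwa [e]

theorem fracDichrom_eq : fracDichromNum A5c = 5 / 2 := by
  letI := Classical.decEq (Fin 5)
  have hlb : ∀ w ∈ {w : ℝ | ∃ g : Finset (Fin 5) → ℝ,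
      (∀ U, 0 ≤ g U) ∧
      (∀ U : Finset (Fin 5), ¬ IsAcyclicSet A5c (↑U : Set (Fin 5)) → g U = 0) ∧
      (∀ v : Fin 5, 1 ≤ ∑ U : Finset (Fin 5), (if v ∈ U then g U else 0)) ∧
      w = ∑ U : Finset (Fin 5), g U}, 5 / 2 ≤ w := by
    rintro w ⟨g, hg0, hgsupp, hgcov, rfl⟩
    have hcard : ∀ U : Finset (Fin 5), (U.card : ℝ) * g U ≤ 2 * g U := by
      intro U
      by_cases h : g U = 0
      · simp [h]
      · have hac : IsAcyclicSet A5c (↑U : Set (Fin 5)) := by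
          by_contra hn; exact h (hgsupp U hn)
        have h2 := acyclic_card_le U hac
        have : (U.card : ℝ) ≤ 2 := by exact_mod_cast h2
        exact mul_le_mul_of_nonneg_right this (hg0 U)
    have h5 : (5:ℝ) ≤ ∑ U : Finset (Fin 5), (U.card : ℝ) * g U := by
      calc (5:ℝ) = ∑ _v : Fin 5, (1:ℝ) := by simp
        _ ≤ ∑ v : Fin 5, ∑ U : Finset (Fin 5), (if v ∈ U then g U else 0) :=
            Finset.sum_le_sum (fun v _ => hgcov v)
        _ = ∑ U : Finset (Fin 5), ∑ v : Fin 5, (if v ∈ U then g U else 0) := Finset.sum_comm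
        _ = ∑ U : Finset (Fin 5), (U.card : ℝ) * g U := by
            apply Finset.sum_congr rfl
            intro U _
            rw [Finset.sum_ite_mem, Finset.univ_inter, Finset.sum_const, nsmul_eq_mul]
    have h2g := Finset.sum_le_sum (fun U (_ : U ∈ Finset.univ) => hcard U)
    rw [← Finset.mul_sum] at h2g
    linarith [h5.trans h2g]
  have hmem : (5/2 : ℝ) ∈ {w : ℝ | ∃ g : Finset (Fin 5) → ℝ,
      (∀ U, 0 ≤ g U) ∧
      (∀ U : Finset (Fin 5), ¬ IsAcyclicSet A5c (↑U : Set (Fin 5)) → g U = 0) ∧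
      (∀ v : Fin 5, 1 ≤ ∑ U : Finset (Fin 5), (if v ∈ U then g U else 0)) ∧
      w = ∑ U : Finset (Fin 5), g U} := by
    refine ⟨gfrac, fun U => ?_, fun U hU => ?_, fun v => ?_, ?_⟩
    · unfold gfrac; split <;> norm_num
    · unfold gfrac
      rw [if_neg]
      intro hmem
      exact hU (pairsF_acyclic U hmem)
    · have hswap : ∀ U : Finset (Fin 5), (if v ∈ U then gfrac U else 0)
          = (if U ∈ pairsF then (if v ∈ U then (2:ℝ)⁻¹ else 0) else 0) := by
        intro U
        unfold gfrac
        by_cases h1 : U ∈ pairsF <;> by_cases h2 : v ∈ U <;> simp [h1, h2]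
      rw [Finset.sum_congr rfl (fun U _ => hswap U), Finset.sum_ite_mem, Finset.univ_inter,
        pairsF_sum]
      fin_cases v <;> norm_num [Fin.ext_iff, show ((3:Fin 5):ℕ) = 3 from rfl, show ((4:Fin 5):ℕ) = 4 from rfl]
    · have : ∀ U : Finset (Fin 5), gfrac U = (if U ∈ pairsF then (2:ℝ)⁻¹ else 0) := by
        intro U; by_cases h : U ∈ pairsF <;> simp [gfrac, h]
      rw [Finset.sum_congr rfl (fun U _ => this U), Finset.sum_ite_mem, Finset.univ_inter,
        pairsF_sum]
      norm_num
  rw [fracDichromNum]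
  exact le_antisymm (csInf_le ⟨5/2, fun w hw => hlb w hw⟩ hmem) (le_csInf ⟨5/2, hmem⟩ hlb)

noncomputable def useq : ℕ → ℝ := fun t => Real.log (chromNum (andPow A5c t))

lemma one_le_sqrt5 : (1:ℝ) ≤ Real.sqrt 5 := by
  rw [show (1:ℝ) = Real.sqrt 1 by simp]
  exact Real.sqrt_le_sqrt (by norm_num)

lemma chrom_cast_pos (t : ℕ) : (1:ℝ) ≤ (chromNum (andPow A5c t) : ℝ) :=
  le_trans (one_le_pow₀ one_le_sqrt5) (chrom_lower t)

lemma useq_subadd : Subadditive useq := by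
  intro m n
  unfold useq
  have h1 := chrom_cast_pos m
  have h2 := chrom_cast_pos n
  have hle : (chromNum (andPow A5c (m + n)) : ℝ)
      ≤ (chromNum (andPow A5c m) : ℝ) * (chromNum (andPow A5c n) : ℝ) := by
    push_cast [← Nat.cast_mul]
    exact_mod_cast chrom_submul A5c m n
  calc Real.log (chromNum (andPow A5c (m + n)))
      ≤ Real.log ((chromNum (andPow A5c m) : ℝ) * (chromNum (andPow A5c n) : ℝ)) :=
        Real.log_le_log (by linarith [chrom_cast_pos (m+n)]) hle
    _ = _ := Real.log_mul (by linarith) (by linarith)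

lemma useq_nonneg (t : ℕ) : 0 ≤ useq t := Real.log_nonneg (chrom_cast_pos t)

lemma useq_bdd : BddBelow (Set.range fun n : ℕ => useq n / n) := by
  refine ⟨0, ?_⟩
  rintro x ⟨n, rfl⟩
  exact div_nonneg (useq_nonneg n) (Nat.cast_nonneg n)


/-- √5 ≤ r_D(A⃗_5ᶜ) ≤ √6 and χ_{dir,f}(A⃗_5ᶜ) = 5/2, in particular
r_D(A⃗_5ᶜ) < χ_{dir,f}(A⃗_5ᶜ). -/
theorem stmt13 :
    ∃ r : ℝ,
      Tendsto (fun t : ℕ => (chromNum (andPow A5c t) : ℝ) ^ (1 / (t : ℝ))) atTop (nhds r) ∧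
      Real.sqrt 5 ≤ r ∧ r ≤ Real.sqrt 6 ∧
      fracDichromNum A5c = 5 / 2 ∧
      r < fracDichromNum A5c := by
  have hsub := useq_subadd
  have hlim := hsub.tendsto_lim useq_bdd
  have hle6 : Real.exp hsub.lim ≤ Real.sqrt 6 := by
    have h2 : ∀ t : ℕ, 1 ≤ t →
        hsub.lim ≤ Real.log (Real.sqrt 6) + Real.log (4 * t + 1) / (2 * t) := by
      intro t ht
      have h2t : (2 * t : ℕ) ≠ 0 := by omega
      have hA := hsub.lim_le_div useq_bdd h2t
      have htpos : (0:ℝ) < (t:ℝ) := by exact_mod_cast ht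
      have hub : useq (2 * t) ≤ 2 * t * Real.log (Real.sqrt 6) + Real.log (4 * t + 1) := by
        unfold useq
        have hcast : ((chromNum (andPow A5c (2*t)) : ℕ) : ℝ) ≤ (6:ℝ) ^ t * (4 * t + 1) := by
          have := chrom_even t
          push_cast
          exact_mod_cast this
        calc Real.log (chromNum (andPow A5c (2*t)))
            ≤ Real.log ((6:ℝ) ^ t * (4 * t + 1)) :=
              Real.log_le_log (by linarith [chrom_cast_pos (2*t)]) hcast
          _ = t * Real.log 6 + Real.log (4 * t + 1) := by
              rw [Real.log_mul (by positivity) (by positivity), Real.log_pow]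
          _ = 2 * t * Real.log (Real.sqrt 6) + Real.log (4 * t + 1) := by
              rw [Real.log_sqrt (by norm_num)]; ring
      refine hA.trans ?_
      rw [div_le_iff₀ (by positivity : (0:ℝ) < ((2*t : ℕ) : ℝ))]
      push_cast
      rw [add_mul]
      have : Real.log (4 * t + 1) / (2 * t) * (2 * t) = Real.log (4 * t + 1) := by
        field_simp
      rw [this]
      linarith [hub]
    have h3 : Tendsto (fun t : ℕ => Real.log (Real.sqrt 6) + Real.log (4 * t + 1) / (2 * t))
        atTop (nhds (Real.log (Real.sqrt 6) + 0)) := by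
      apply Tendsto.const_add
      have hinner : Tendsto (fun t : ℕ => 4 * (t:ℝ) + 1) atTop atTop := by
        apply Filter.tendsto_atTop_add_const_right
        exact Tendsto.const_mul_atTop (by norm_num) tendsto_natCast_atTop_atTop
      have htend := (Real.tendsto_pow_log_div_mul_add_atTop (1/2) (-1/2) 1
        (by norm_num)).comp hinner
      refine htend.congr fun t => ?_
      simp only [Function.comp]
      rw [pow_one]
      congr 1
      ring
    have hL : hsub.lim ≤ Real.log (Real.sqrt 6) := by
      have := ge_of_tendsto h3 (by filter_upwards [eventually_ge_atTop 1] with t ht using h2 t ht)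
      simpa using this
    have h6 : (0:ℝ) < Real.sqrt 6 := Real.sqrt_pos.2 (by norm_num)
    calc Real.exp hsub.lim ≤ Real.exp (Real.log (Real.sqrt 6)) := Real.exp_le_exp.2 hL
      _ = Real.sqrt 6 := Real.exp_log h6
  have htend : Tendsto (fun t : ℕ => (chromNum (andPow A5c t) : ℝ) ^ (1 / (t : ℝ)))
      atTop (nhds (Real.exp hsub.lim)) := by
    refine ((Real.continuous_exp.tendsto _).comp hlim).congr' ?_
    filter_upwards [eventually_ge_atTop 1] with t ht
    rw [Real.rpow_def_of_pos (by linarith [chrom_cast_pos t]), mul_one_div]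
    rfl
  have h5r : Real.sqrt 5 ≤ Real.exp hsub.lim := by
    have h1 : Real.log (Real.sqrt 5) ≤ hsub.lim := by
      rw [Subadditive.lim]
      refine le_csInf ⟨(fun n : ℕ => useq n / n) 1,
        Set.mem_image_of_mem (fun n : ℕ => useq n / n) (by norm_num)⟩ ?_
      rintro b ⟨n, hn, rfl⟩
      have hnpos : (0:ℝ) < n := by exact_mod_cast hn
      rw [le_div_iff₀ hnpos]
      calc Real.log (Real.sqrt 5) * n = Real.log (Real.sqrt 5 ^ n) := by
            rw [Real.log_pow]; ring
        _ ≤ useq n := Real.log_le_log (pow_pos sqrt5_pos n) (chrom_lower n)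
    calc Real.sqrt 5 = Real.exp (Real.log (Real.sqrt 5)) := (Real.exp_log sqrt5_pos).symm
      _ ≤ Real.exp hsub.lim := Real.exp_le_exp.2 h1
  refine ⟨Real.exp hsub.lim, htend, h5r, hle6, fracDichrom_eq, ?_⟩
  rw [fracDichrom_eq]
  exact lt_of_le_of_lt hle6 ((Real.sqrt_lt' (by norm_num : (0:ℝ) < 5/2)).2 (by norm_num))
end

section
/- Let B(t) denote the minimum number of cross-intersecting families whose union is the set of all pairs of disjoint subsets of a t-element set. Then lim_{t→∞} (1/t)·log₂ B(t) = 1. -/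
open Filter

section Defs

/-- A family of pairs of disjoint subsets of {1,…,t} is cross-intersecting if any
two distinct members (A,B), (A',B') satisfy A∩B' ≠ ∅ and A'∩B ≠ ∅. -/
def CrossIntersecting (t : ℕ) (F : Set (Finset (Fin t) × Finset (Fin t))) : Prop :=
  ∀ p ∈ F, ∀ q ∈ F, p ≠ q → (p.1 ∩ q.2).Nonempty ∧ (q.1 ∩ p.2).Nonempty

/-- B(t): the minimum number of cross-intersecting families of pairs of disjoint
subsets of a t-element set whose union contains all pairs of disjoint subsets. -/
noncomputable def minCrossCover (t : ℕ) : ℕ :=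
  sInf {n : ℕ | ∃ F : Fin n → Set (Finset (Fin t) × Finset (Fin t)),
    (∀ i, CrossIntersecting t (F i) ∧ ∀ p ∈ F i, Disjoint p.1 p.2) ∧
    ∀ p : Finset (Fin t) × Finset (Fin t), Disjoint p.1 p.2 → ∃ i, p ∈ F i}

end Defs

section Aux

open Finset

/-- Key counting lemma: a cross-intersecting family of disjoint pairs whose unions
all have size `s` has at most `2^s` members. -/
lemma family_card_le {t s : ℕ} (G : Finset (Finset (Fin t) × Finset (Fin t)))
    (hcross : ∀ p ∈ G, ∀ q ∈ G, p ≠ q → (p.1 ∩ q.2).Nonempty)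
    (hdisj : ∀ p ∈ G, Disjoint p.1 p.2)
    (hs : ∀ p ∈ G, (p.1 ∪ p.2).card = s) :
    G.card ≤ 2 ^ s := by
  rcases G.eq_empty_or_nonempty with h | ⟨p0, hp0⟩
  · simp [h, Nat.one_le_two_pow]
  have hst : s ≤ t := by
    rw [← hs p0 hp0]
    simpa using card_le_univ (p0.1 ∪ p0.2)
  set S : Finset (Fin t) × Finset (Fin t) → Finset (Finset (Fin t)) :=
    fun p => Finset.Icc p.1 p.2ᶜ with hS
  have hcardS : ∀ p ∈ G, (S p).card = 2 ^ (t - s) := by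
    intro p hp
    have hsub : p.1 ⊆ p.2ᶜ := by
      intro x hx
      simp only [Finset.mem_compl]
      exact Finset.disjoint_left.1 (hdisj p hp) hx
    rw [hS]
    rw [Finset.card_Icc_finset hsub, Finset.card_compl]
    simp only [Fintype.card_fin]
    have hu : p.1.card + p.2.card = s := by
      rw [← card_union_of_disjoint (hdisj p hp)]; exact hs p hp
    congr 1
    omega
  have hdisjS : ∀ p ∈ G, ∀ q ∈ G, p ≠ q → Disjoint (S p) (S q) := by
    intro p hp q hq hpq
    rw [Finset.disjoint_left]
    intro X hXp hXq
    simp only [hS, Finset.mem_Icc] at hXp hXq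
    obtain ⟨x, hx⟩ := hcross p hp q hq hpq
    simp only [Finset.mem_inter] at hx
    have hx1 : x ∈ X := hXp.1 hx.1
    have hx2 : x ∈ q.2ᶜ := hXq.2 hx1
    simp only [Finset.mem_compl] at hx2
    exact hx2 hx.2
  have hbig : G.card * 2 ^ (t - s) ≤ 2 ^ t := by
    calc G.card * 2 ^ (t - s) = ∑ p ∈ G, (S p).card := by
          rw [Finset.sum_congr rfl hcardS, Finset.sum_const, smul_eq_mul]
      _ = (G.biUnion S).card := (Finset.card_biUnion hdisjS).symm
      _ ≤ (Finset.univ : Finset (Finset (Fin t))).card := card_le_univ _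
      _ = 2 ^ t := by simp [Finset.card_univ]
  have h2 : (2:ℕ) ^ t = 2 ^ s * 2 ^ (t - s) := by
    rw [← pow_add]; congr 1; omega
  rw [h2] at hbig
  exact Nat.le_of_mul_le_mul_right hbig (Nat.pow_pos (by norm_num))

lemma helper_nonempty {t : ℕ} (A B A' B' : Finset (Fin t))
    (_hAB : Disjoint A B) (_hA2B2 : Disjoint A' B') (hU : A ∪ B = A' ∪ B')
    (hc : A.card = A'.card) (hne : A ≠ A') : (A ∩ B').Nonempty := by
  have hsub : ¬ A ⊆ A' := fun h => hne (Finset.eq_of_subset_of_card_le h (le_of_eq hc.symm))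
  obtain ⟨x, hxA, hxA'⟩ := Finset.not_subset.1 hsub
  refine ⟨x, Finset.mem_inter.2 ⟨hxA, ?_⟩⟩
  have hx : x ∈ A' ∪ B' := hU ▸ Finset.mem_union_left _ hxA
  rcases Finset.mem_union.1 hx with h | h
  · exact absurd h hxA'
  · exact h

/-- The explicit covering: families indexed by `(a, C)` consisting of all disjoint
pairs with union `C` and first component of size `a`. -/
lemma cover_witness (t : ℕ) : ((t+1) * 2 ^ t) ∈
    {n : ℕ | ∃ F : Fin n → Set (Finset (Fin t) × Finset (Fin t)),
      (∀ i, CrossIntersecting t (F i) ∧ ∀ p ∈ F i, Disjoint p.1 p.2) ∧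
      ∀ p : Finset (Fin t) × Finset (Fin t), Disjoint p.1 p.2 → ∃ i, p ∈ F i} := by
  have hcard : Fintype.card (Fin (t+1) × Finset (Fin t)) = (t+1) * 2 ^ t := by
    simp [Fintype.card_finset]
  let e : (Fin (t+1) × Finset (Fin t)) ≃ Fin ((t+1) * 2 ^ t) :=
    Fintype.equivFinOfCardEq hcard
  let G : Fin (t+1) × Finset (Fin t) → Set (Finset (Fin t) × Finset (Fin t)) :=
    fun x => {p | Disjoint p.1 p.2 ∧ p.1 ∪ p.2 = x.2 ∧ p.1.card = (x.1 : ℕ)}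
  refine ⟨fun i => G (e.symm i), fun i => ?_, fun p hp => ?_⟩
  · constructor
    · rintro p ⟨hpd, hpU, hpa⟩ q ⟨hqd, hqU, hqa⟩ hpq
      have hUeq : p.1 ∪ p.2 = q.1 ∪ q.2 := by rw [hpU, hqU]
      have hceq : p.1.card = q.1.card := by rw [hpa, hqa]
      have hne : p.1 ≠ q.1 := by
        intro h1
        apply hpq
        have h2 : p.2 = q.2 := by
          have := Finset.union_sdiff_cancel_left hpd
          rw [← this, hUeq, h1, Finset.union_sdiff_cancel_left hqd]
        exact Prod.ext h1 h2
      exact ⟨helper_nonempty _ _ _ _ hpd hqd hUeq hceq hne,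
        helper_nonempty _ _ _ _ hqd hpd hUeq.symm hceq.symm (Ne.symm hne)⟩
    · rintro p ⟨hpd, _, _⟩
      exact hpd
  · have hlt : p.1.card < t + 1 := by
      have := Finset.card_le_univ p.1
      simp only [Finset.card_univ, Fintype.card_fin] at this
      omega
    refine ⟨e (⟨p.1.card, hlt⟩, p.1 ∪ p.2), ?_⟩
    simp only [Equiv.symm_apply_apply]
    exact ⟨hp, rfl, rfl⟩

lemma minCrossCover_le (t : ℕ) : minCrossCover t ≤ (t+1) * 2 ^ t :=
  Nat.sInf_le (cover_witness t)

lemma pow_le_mul_minCrossCover (t : ℕ) : 2 ^ t ≤ (t+1) * minCrossCover t := by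
  classical
  obtain ⟨F, hF1, hF2⟩ := Nat.sInf_mem (⟨_, cover_witness t⟩ :
    {n : ℕ | ∃ F : Fin n → Set (Finset (Fin t) × Finset (Fin t)),
      (∀ i, CrossIntersecting t (F i) ∧ ∀ p ∈ F i, Disjoint p.1 p.2) ∧
      ∀ p : Finset (Fin t) × Finset (Fin t), Disjoint p.1 p.2 → ∃ i, p ∈ F i}.Nonempty)
  set n := minCrossCover t with hn
  set s := t / 2 with hsdef
  set P : Finset (Finset (Fin t) × Finset (Fin t)) :=
    (Finset.powersetCard s Finset.univ).biUnion
      (fun C => C.powerset.image (fun A => (A, C \ A))) with hP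
  have hPmem : ∀ p ∈ P, Disjoint p.1 p.2 ∧ (p.1 ∪ p.2).card = s := by
    intro p hp
    simp only [hP, Finset.mem_biUnion, Finset.mem_image, Finset.mem_powersetCard,
      Finset.mem_powerset] at hp
    obtain ⟨C, ⟨-, hCs⟩, A, hAC, rfl⟩ := hp
    exact ⟨Finset.disjoint_sdiff, by
      simp only [Finset.union_sdiff_of_subset hAC]; exact hCs⟩
  have hPcard : P.card = t.choose s * 2 ^ s := by
    rw [hP, Finset.card_biUnion]
    · have hterm : ∀ C ∈ Finset.powersetCard s (Finset.univ : Finset (Fin t)),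
          (C.powerset.image (fun A => (A, C \ A))).card = 2 ^ s := by
        intro C hC
        rw [Finset.card_image_of_injective _ (fun A A' h => congrArg Prod.fst h),
          Finset.card_powerset, (Finset.mem_powersetCard.1 hC).2]
      rw [Finset.sum_congr rfl hterm, Finset.sum_const, smul_eq_mul,
        Finset.card_powersetCard, Finset.card_univ, Fintype.card_fin]
    · intro C hC C' hC' hne
      rw [Function.onFun, Finset.disjoint_left]
      intro p hp hp'
      simp only [Finset.mem_image, Finset.mem_powerset] at hp hp'
      obtain ⟨A, hAC, rfl⟩ := hp
      obtain ⟨A', hA'C', hA'⟩ := hp'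
      apply hne
      have h1 : A = A' := congrArg Prod.fst hA'.symm
      have h2 : C \ A = C' \ A' := congrArg Prod.snd hA'.symm
      rw [← Finset.union_sdiff_of_subset hAC, ← Finset.union_sdiff_of_subset hA'C', h2, h1]
  have hsub : P ⊆ Finset.univ.biUnion (fun i : Fin n => P.filter (fun p => p ∈ F i)) := by
    intro p hp
    obtain ⟨i, hi⟩ := hF2 p (hPmem p hp).1
    exact Finset.mem_biUnion.2 ⟨i, Finset.mem_univ i, Finset.mem_filter.2 ⟨hp, hi⟩⟩
  have hbound : ∀ i : Fin n, (P.filter (fun p => p ∈ F i)).card ≤ 2 ^ s := by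
    intro i
    apply family_card_le
    · intro p hp q hq hpq
      exact ((hF1 i).1 p (Finset.mem_filter.1 hp).2 q (Finset.mem_filter.1 hq).2 hpq).1
    · intro p hp
      exact (hF1 i).2 p (Finset.mem_filter.1 hp).2
    · intro p hp
      exact (hPmem p (Finset.mem_filter.1 hp).1).2
  have hPle : P.card ≤ n * 2 ^ s := by
    calc P.card ≤ (Finset.univ.biUnion (fun i : Fin n => P.filter (fun p => p ∈ F i))).card :=
          Finset.card_le_card hsub
      _ ≤ ∑ i : Fin n, (P.filter (fun p => p ∈ F i)).card := Finset.card_biUnion_le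
      _ ≤ ∑ _i : Fin n, 2 ^ s := Finset.sum_le_sum (fun i _ => hbound i)
      _ = n * 2 ^ s := by simp [Finset.sum_const, mul_comm]
  have hchoose : t.choose s ≤ n := by
    have := hPcard ▸ hPle
    exact Nat.le_of_mul_le_mul_right this (Nat.pow_pos (by norm_num))
  calc 2 ^ t = ∑ m ∈ Finset.range (t + 1), t.choose m := (Nat.sum_range_choose t).symm
    _ ≤ ∑ _m ∈ Finset.range (t + 1), t.choose s :=
        Finset.sum_le_sum (fun i _ => Nat.choose_le_middle i t)
    _ = (t + 1) * t.choose s := by simp [Finset.sum_const, mul_comm]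
    _ ≤ (t + 1) * n := Nat.mul_le_mul_left _ hchoose

end Aux

/-- lim_{t→∞} (1/t)·log₂ B(t) = 1. -/
theorem stmt16 :
    Tendsto (fun t : ℕ => Real.logb 2 (minCrossCover t) / t) atTop (nhds 1) := by
  have hpos : ∀ t : ℕ, 1 ≤ minCrossCover t := by
    intro t
    by_contra h
    have h0 : minCrossCover t = 0 := by omega
    have := pow_le_mul_minCrossCover t
    rw [h0, mul_zero] at this
    have h2 : (0:ℕ) < 2 ^ t := Nat.pow_pos (by norm_num)
    omega
  -- logb bounds
  have key : ∀ t : ℕ, (t : ℝ) - Real.logb 2 (t + 1) ≤ Real.logb 2 (minCrossCover t) ∧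
      Real.logb 2 (minCrossCover t) ≤ (t : ℝ) + Real.logb 2 (t + 1) := by
    intro t
    have hB1 : (1 : ℝ) ≤ (minCrossCover t : ℝ) := by exact_mod_cast hpos t
    have hBpos : (0 : ℝ) < (minCrossCover t : ℝ) := by linarith
    have ht1 : (0 : ℝ) < (t : ℝ) + 1 := by positivity
    have hlow : (2 : ℝ) ^ t ≤ ((t : ℝ) + 1) * minCrossCover t := by
      exact_mod_cast pow_le_mul_minCrossCover t
    have hup : (minCrossCover t : ℝ) ≤ ((t : ℝ) + 1) * 2 ^ t := by
      exact_mod_cast minCrossCover_le t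
    have hlogpow : Real.logb 2 ((2 : ℝ) ^ t) = t := by
      rw [Real.logb_pow, Real.logb_self_eq_one one_lt_two, mul_one]
    constructor
    · have h1 : Real.logb 2 ((2:ℝ) ^ t) ≤ Real.logb 2 (((t : ℝ) + 1) * minCrossCover t) :=
        Real.logb_le_logb_of_le one_lt_two (by positivity) hlow
      rw [hlogpow, Real.logb_mul ht1.ne' hBpos.ne'] at h1
      linarith
    · have h1 : Real.logb 2 (minCrossCover t : ℝ) ≤ Real.logb 2 (((t : ℝ) + 1) * 2 ^ t) :=
        Real.logb_le_logb_of_le one_lt_two hBpos hup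
      rw [Real.logb_mul ht1.ne' (by positivity), hlogpow] at h1
      linarith
  -- the error term tends to zero
  have herr : Tendsto (fun t : ℕ => Real.logb 2 (t + 1) / t) atTop (nhds 0) := by
    have h1 : (fun t : ℕ => Real.log ((t : ℝ) + 1)) =o[atTop] (fun t : ℕ => (t : ℝ)) := by
      have h2 : (fun t : ℕ => Real.log ((t : ℝ) + 1)) =o[atTop]
          (fun t : ℕ => (t : ℝ) + 1) := by
        have := Real.isLittleO_log_id_atTop.comp_tendsto
          (tendsto_atTop_add_const_right atTop (1 : ℝ) tendsto_natCast_atTop_atTop)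
        simpa [Function.comp_def] using this
      refine h2.trans_isBigO (Asymptotics.IsBigO.of_bound 2 ?_)
      filter_upwards [eventually_ge_atTop 1] with t ht
      have ht1 : (1 : ℝ) ≤ (t : ℝ) := by exact_mod_cast ht
      rw [Real.norm_eq_abs, Real.norm_eq_abs, abs_of_nonneg (by linarith),
        abs_of_nonneg (by linarith)]
      linarith
    have h3 := h1.tendsto_div_nhds_zero
    have h4 : (fun t : ℕ => Real.logb 2 ((t : ℝ) + 1) / t) =
        fun t : ℕ => (Real.log ((t : ℝ) + 1) / t) / Real.log 2 := by
      funext t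
      rw [Real.logb]
      ring
    rw [h4]
    simpa using h3.div_const (Real.log 2)
  -- squeeze
  have hlowT : Tendsto (fun t : ℕ => 1 - Real.logb 2 (t + 1) / t) atTop (nhds 1) := by
    have := (tendsto_const_nhds : Tendsto (fun _ : ℕ => (1:ℝ)) atTop (nhds 1)).sub herr
    simpa using this
  have hupT : Tendsto (fun t : ℕ => 1 + Real.logb 2 (t + 1) / t) atTop (nhds 1) := by
    have := (tendsto_const_nhds : Tendsto (fun _ : ℕ => (1:ℝ)) atTop (nhds 1)).add herr
    simpa using this
  refine tendsto_of_tendsto_of_tendsto_of_le_of_le' hlowT hupT ?_ ?_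
  · filter_upwards [eventually_ge_atTop 1] with t ht
    have htpos : (0 : ℝ) < t := by exact_mod_cast ht
    calc 1 - Real.logb 2 (t + 1) / t = ((t : ℝ) - Real.logb 2 (t + 1)) / t := by
          rw [sub_div, div_self htpos.ne']
      _ ≤ Real.logb 2 (minCrossCover t) / t := by
          gcongr
          exact (key t).1
  · filter_upwards [eventually_ge_atTop 1] with t ht
    have htpos : (0 : ℝ) < t := by exact_mod_cast ht
    calc Real.logb 2 (minCrossCover t) / t ≤ ((t : ℝ) + Real.logb 2 (t + 1)) / t := by
          gcongr
          exact (key t).2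
      _ = 1 + Real.logb 2 (t + 1) / t := by
          rw [add_div, div_self htpos.ne']
end

section
/- Let G be a digraph on vertex set V. For x,y ∈ V^t say that y is a possible output of x if for every coordinate i, y_i = x_i or (x_i,y_i) ∈ E(G). Then for every t ≥ 1, the minimum number N for which there exists a map φ : V^t → {1,…,N} such that no two distinct sequences x, x' ∈ V^t with φ(x) = φ(x') have a common possible output, equals χ(cl(G)^{∧t}), the chromatic number of the t-th AND power of the closure graph cl(G). -/
open Filter

lemma coord_iff {V : Type*} (E : V → V → Prop) (a b : V) :
    (∃ z, (z = a ∨ E a z) ∧ (z = b ∨ E b z)) ↔ (a = b ∨ closureRel E a b) := by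
  constructor
  · rintro ⟨z, hz1, hz2⟩
    by_cases hab : a = b
    · exact Or.inl hab
    · refine Or.inr ⟨hab, ?_⟩
      rcases hz1 with rfl | h1
      · rcases hz2 with rfl | h2
        · exact absurd rfl hab
        · exact Or.inr (Or.inl h2)
      · rcases hz2 with rfl | h2
        · exact Or.inl h1
        · exact Or.inr (Or.inr ⟨z, h1, h2⟩)
  · rintro (rfl | ⟨hab, (h | h | ⟨v, h1, h2⟩)⟩)
    · exact ⟨a, Or.inl rfl, Or.inl rfl⟩
    · exact ⟨b, Or.inr h, Or.inl rfl⟩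
    · exact ⟨a, Or.inl rfl, Or.inr h⟩
    · exact ⟨v, Or.inr h1, Or.inr h2⟩

/-- the minimum number of messages needed for complete zero-error
decoding of t-blocks equals χ(cl(G)^{∧t}). -/
theorem stmt17 {V : Type*} [Fintype V] [Nonempty V]
    (E : V → V → Prop) (hE : ∀ v, ¬ E v v) (t : ℕ) (ht : 1 ≤ t) :
    sInf {N : ℕ | ∃ φ : (Fin t → V) → Fin N,
        ∀ x x' : Fin t → V, x ≠ x' → φ x = φ x' →
          ¬ ∃ y : Fin t → V,
            (∀ i, y i = x i ∨ E (x i) (y i)) ∧ (∀ i, y i = x' i ∨ E (x' i) (y i))} =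
      chromNum (andPow (closureRel E) t) := by
  unfold chromNum
  congr 1
  ext N
  constructor
  · rintro ⟨φ, hφ⟩
    refine ⟨φ, fun x x' hedge hc => ?_⟩
    obtain ⟨hne, h⟩ := hedge
    refine hφ x x' hne hc ?_
    have : ∀ i, ∃ z, (z = x i ∨ E (x i) z) ∧ (z = x' i ∨ E (x' i) z) := by
      intro i
      exact (coord_iff E (x i) (x' i)).mpr (h i)
    choose y hy1 hy2 using this
    exact ⟨y, hy1, hy2⟩
  · rintro ⟨c, hc⟩
    refine ⟨c, fun x x' hne hcol ⟨y, hy1, hy2⟩ => ?_⟩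
    refine hc x x' ⟨hne, fun i => ?_⟩ hcol
    exact (coord_iff E (x i) (x' i)).mp ⟨y i, hy1 i, hy2 i⟩
end

section
/- If G is a finite simple undirected bipartite graph with |E(G)| ≥ |V(G)| + 1, then there is no digraph F on the vertex set V(G) whose closure graph cl(F) equals G. -/
open Filter

/-- a bipartite graph with more edges than vertices is not the
closure graph of any digraph. -/
theorem stmt18 {V : Type*} [Fintype V] (G : SimpleGraph V) [DecidableRel G.Adj]
    (hbip : ∃ f : V → Bool, ∀ u v : V, G.Adj u v → f u ≠ f v)
    (hcard : Fintype.card V + 1 ≤ G.edgeFinset.card) :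
    ¬ ∃ F : V → V → Prop, (∀ v, ¬ F v v) ∧ ∀ a b : V, G.Adj a b ↔ closureRel F a b := by
  rintro ⟨F, hirr, hcl⟩
  obtain ⟨f, hf⟩ := hbip
  -- in-degree at most one
  have hindeg : ∀ a b v : V, F a v → F b v → a = b := by
    intro a b v hav hbv
    by_contra hab
    have hGab : G.Adj a b := (hcl a b).2 ⟨hab, Or.inr (Or.inr ⟨v, hav, hbv⟩)⟩
    have hav' : a ≠ v := fun h => hirr v (h ▸ hav)
    have hbv' : b ≠ v := fun h => hirr v (h ▸ hbv)
    have hGav : G.Adj a v := (hcl a v).2 ⟨hav', Or.inl hav⟩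
    have hGbv : G.Adj b v := (hcl b v).2 ⟨hbv', Or.inl hbv⟩
    have h0 := hf a b hGab
    have h1 := hf a v hGav
    have h2 := hf b v hGbv
    revert h0 h1 h2
    cases f a <;> cases f b <;> cases f v <;> simp
  -- every edge is a direct F edge
  have hex : ∀ e ∈ G.edgeFinset, ∃ v u, e = s(u, v) ∧ F u v := by
    intro e he
    rw [SimpleGraph.mem_edgeFinset] at he
    induction e using Sym2.ind with
    | _ a b =>
      rw [SimpleGraph.mem_edgeSet] at he
      have hne : a ≠ b := ((hcl a b).1 he).1
      rcases ((hcl a b).1 he).2 with h | h | ⟨v, hav, hbv⟩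
      · exact ⟨b, a, rfl, h⟩
      · exact ⟨a, b, Sym2.eq_swap, h⟩
      · exact absurd (hindeg a b v hav hbv) hne
  classical
  rcases isEmpty_or_nonempty V with hV | hV
  · have : G.edgeFinset.card ≤ (Finset.univ : Finset (Sym2 V)).card :=
      Finset.card_le_univ _
    have h0 : Fintype.card V = 0 := Fintype.card_eq_zero
    have h1 : (Finset.univ : Finset (Sym2 V)).card = 0 := by simp
    omega
  set φ : Sym2 V → V := fun e =>
    if h : ∃ v u, e = s(u, v) ∧ F u v then h.choose else Classical.arbitrary V with hφ
  have hspec : ∀ e ∈ G.edgeFinset, ∃ u, e = s(u, φ e) ∧ F u (φ e) := by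
    intro e he
    have h := hex e he
    simp only [hφ, dif_pos h]
    exact h.choose_spec
  have hinj : Set.InjOn φ ↑G.edgeFinset := by
    intro e₁ h₁ e₂ h₂ heq
    obtain ⟨u₁, he₁, hF₁⟩ := hspec e₁ h₁
    obtain ⟨u₂, he₂, hF₂⟩ := hspec e₂ h₂
    rw [heq] at he₁ hF₁
    have := hindeg u₁ u₂ (φ e₂) hF₁ hF₂
    rw [he₁, this]; exact he₂.symm
  have hle : G.edgeFinset.card ≤ Fintype.card V := by
    have := Finset.card_le_card_of_injOn φ (fun e _ => Finset.mem_univ (φ e)) hinj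
    simpa using this
  omega
end
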